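/- arXiv:2311.11049 — 10 statements merged into one kernel-verified Lean document; each statement's English description precedes it below -/
import Mathlib

section
/- An element g = (m, k) ∈ G is α-regular if and only if Σ_i c i j * π i (m i) = 0 in ZMod p for every j : Fin s, and Σ_j c i j * k j = 0 in ZMod p for every i : Fin t (equivalently, the vector obtained from m by reducing each coordinate mod p lies in the kernel of the transpose of c, and k lies in the kernel of c). -/
/-- The bilinear 2-cocycle `α (m,k) (m',k') = ξ ^ (∑ i ∑ j, c i j * πᵢ (m' i) * k j)`
on `G = (Π i, ZMod (p ^ r i)) × (Fin s → ZMod p)`, where `πᵢ : ZMod (p ^ r i) →+* ZMod p`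
is the natural projection. -/
noncomputable def bilinAlpha (p : ℕ) {t s : ℕ} (r : Fin t → ℕ) (hr : ∀ i, 1 ≤ r i)
    (c : Matrix (Fin t) (Fin s) (ZMod p)) (ξ : ℂˣ)
    (g h : (∀ i : Fin t, ZMod (p ^ r i)) × (Fin s → ZMod p)) : ℂˣ :=
  ξ ^ (∑ i, ∑ j, c i j *
      ZMod.castHom (dvd_pow_self p (Nat.one_le_iff_ne_zero.mp (hr i))) (ZMod p) (h.1 i) *
      g.2 j).val

theorem alpha_regular_iff (p t s : ℕ) (hp : p.Prime) (ht : 1 ≤ t) (hs : 1 ≤ s)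
    (r : Fin t → ℕ) (hr : ∀ i, 1 ≤ r i)
    (c : Matrix (Fin t) (Fin s) (ZMod p)) (ξ : ℂˣ) (hξ : IsPrimitiveRoot ξ p)
    (g : (∀ i : Fin t, ZMod (p ^ r i)) × (Fin s → ZMod p)) :
    (∀ x, bilinAlpha p r hr c ξ g x = bilinAlpha p r hr c ξ x g) ↔
      ((∀ j, ∑ i, c i j *
          ZMod.castHom (dvd_pow_self p (Nat.one_le_iff_ne_zero.mp (hr i))) (ZMod p) (g.1 i) = 0)
        ∧ (∀ i, ∑ j, c i j * g.2 j = 0)) := by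
  haveI : NeZero p := ⟨hp.ne_zero⟩
  have key : ∀ a b : ZMod p, ξ ^ a.val = ξ ^ b.val ↔ a = b := by
    intro a b
    constructor
    · intro h
      have := hξ.pow_inj (ZMod.val_lt a) (ZMod.val_lt b) h
      exact ZMod.val_injective p this
    · rintro rfl; rfl
  simp only [bilinAlpha]
  constructor
  · intro h
    constructor
    · intro j
      have h1 := h (0, Pi.single j 1)
      rw [key] at h1
      simpa [Finset.mul_sum, Pi.single_apply, mul_comm, mul_assoc, mul_left_comm]
        using h1.symm
    · intro i
      have h1 := h (Pi.single i 1, 0)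
      rw [key] at h1
      simp only [Pi.single_apply] at h1
      rw [Finset.sum_eq_single i] at h1
      · have hone : (ZMod.cast (1 : ZMod (p ^ r i)) : ZMod p) = 1 := by
          simpa using
            map_one (ZMod.castHom (dvd_pow_self p (Nat.one_le_iff_ne_zero.mp (hr i))) (ZMod p))
        simpa [hone] using h1
      · intro b _ hb
        simp [hb]
      · simp
  · rintro ⟨h1, h2⟩ x
    rw [key]
    have L : (∑ i, ∑ j, c i j *
        ZMod.castHom (dvd_pow_self p (Nat.one_le_iff_ne_zero.mp (hr i))) (ZMod p) (x.1 i) *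
        g.2 j) = 0 := by
      refine Finset.sum_eq_zero fun i _ => ?_
      have : (∑ j, c i j *
          ZMod.castHom (dvd_pow_self p (Nat.one_le_iff_ne_zero.mp (hr i))) (ZMod p) (x.1 i) *
          g.2 j) = (ZMod.castHom (dvd_pow_self p (Nat.one_le_iff_ne_zero.mp (hr i))) (ZMod p)
            (x.1 i)) * ∑ j, c i j * g.2 j := by
        rw [Finset.mul_sum]; congr 1; ext j; ring
      rw [this, h2 i, mul_zero]
    have R : (∑ i, ∑ j, c i j *
        ZMod.castHom (dvd_pow_self p (Nat.one_le_iff_ne_zero.mp (hr i))) (ZMod p) (g.1 i) *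
        x.2 j) = 0 := by
      rw [Finset.sum_comm]
      refine Finset.sum_eq_zero fun j _ => ?_
      have : (∑ i, c i j *
          ZMod.castHom (dvd_pow_self p (Nat.one_le_iff_ne_zero.mp (hr i))) (ZMod p) (g.1 i) *
          x.2 j) = (∑ i, c i j *
          ZMod.castHom (dvd_pow_self p (Nat.one_le_iff_ne_zero.mp (hr i))) (ZMod p) (g.1 i))
          * x.2 j := by
        rw [Finset.sum_mul]
      rw [this, h1 j, zero_mul]
    rw [L, R]
end

section
/- Let n := c.rank be the rank of c over the field ZMod p. Then the number of α-regular elements of G multiplied by p^(2n) equals the cardinality of G; i.e. Fintype.card {g : G // g is α-regular} * p ^ (2 * c.rank) = Fintype.card G. -/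
open Matrix Module

/-- Distribute a dependent product of binary products. -/
def piProdEquiv {ι : Type*} (β γ : ι → Type*) :
    (∀ i, β i × γ i) ≃ (∀ i, β i) × (∀ i, γ i) where
  toFun m := (fun i => (m i).1, fun i => (m i).2)
  invFun q i := (q.1 i, q.2 i)
  left_inv _ := rfl
  right_inv _ := rfl

/-- Subtype of a product with a condition only on the first factor. -/
def prodSubtypeFstEquiv {α β : Type*} (P : α → Prop) :
    {q : α × β // P q.1} ≃ {a // P a} × β where
  toFun q := (⟨q.1.1, q.2⟩, q.1.2)
  invFun x := ⟨(x.1.1, x.2), x.1.2⟩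
  left_inv _ := rfl
  right_inv _ := rfl

/-- `ZMod N` splits (as a type) as `ZMod p` times the kernel of the projection. -/
def zmodSplitEquiv (p N : ℕ) [NeZero p] [NeZero N] (h : p ∣ N) :
    ZMod N ≃ ZMod p × {x : ZMod N // ZMod.castHom h (ZMod p) x = 0} where
  toFun x := (ZMod.castHom h (ZMod p) x,
    ⟨x - ((ZMod.castHom h (ZMod p) x).val : ZMod N), by
      simp [map_sub, map_natCast, ZMod.natCast_val, ZMod.cast_id]⟩)
  invFun q := ((q.1.val : ZMod N)) + q.2.1
  left_inv x := by simp
  right_inv q := by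
    have h1 : ZMod.castHom h (ZMod p) (((q.1.val : ZMod N)) + q.2.1) = q.1 := by
      simp [map_add, q.2.2, map_natCast, ZMod.natCast_val, ZMod.cast_id]
    refine Prod.ext h1 (Subtype.ext ?_)
    show ((q.1.val : ZMod N)) + q.2.1 -
        (((ZMod.castHom h (ZMod p)) (((q.1.val : ZMod N)) + q.2.1)).val : ZMod N) = q.2.1
    rw [h1]; ring

example (p N : ℕ) [NeZero p] [NeZero N] (h : p ∣ N) : True := trivial


theorem card_alpha_regular_mul_p_pow_two_rank (p t s : ℕ) (hp : p.Prime) (ht : 1 ≤ t) (hs : 1 ≤ s)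
    (r : Fin t → ℕ) (hr : ∀ i, 1 ≤ r i)
    (c : Matrix (Fin t) (Fin s) (ZMod p)) (ξ : ℂˣ) (hξ : IsPrimitiveRoot ξ p) :
    Nat.card {g : (∀ i : Fin t, ZMod (p ^ r i)) × (Fin s → ZMod p) //
        ∀ x, bilinAlpha p r hr c ξ g x = bilinAlpha p r hr c ξ x g} * p ^ (2 * c.rank) =
      Nat.card ((∀ i : Fin t, ZMod (p ^ r i)) × (Fin s → ZMod p)) := by
  haveI : Fact p.Prime := ⟨hp⟩
  haveI : NeZero p := ⟨hp.ne_zero⟩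
  haveI : ∀ i : Fin t, NeZero (p ^ r i) := fun i => ⟨pow_ne_zero _ hp.ne_zero⟩
  set π : ∀ i : Fin t, ZMod (p ^ r i) →+* ZMod p := fun i =>
    ZMod.castHom (dvd_pow_self p (Nat.one_le_iff_ne_zero.mp (hr i))) (ZMod p) with hπ
  -- injectivity of the exponent map
  have hinj : ∀ a b : ZMod p, ξ ^ a.val = ξ ^ b.val → a = b := fun a b h =>
    ZMod.val_injective p (hξ.pow_inj (ZMod.val_lt a) (ZMod.val_lt b) h)
  have key : ∀ g x : (∀ i : Fin t, ZMod (p ^ r i)) × (Fin s → ZMod p),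
      bilinAlpha p r hr c ξ g x = bilinAlpha p r hr c ξ x g ↔
      (∑ i, ∑ j, c i j * π i (x.1 i) * g.2 j) = (∑ i, ∑ j, c i j * π i (g.1 i) * x.2 j) := by
    intro g x
    constructor
    · intro h
      exact hinj _ _ h
    · intro h
      unfold bilinAlpha
      rw [show (∑ i, ∑ j, c i j * π i (x.1 i) * g.2 j) = (∑ i, ∑ j, c i j * π i (g.1 i) * x.2 j) from h]
  -- characterization of regularity
  have hreg : ∀ g : (∀ i : Fin t, ZMod (p ^ r i)) × (Fin s → ZMod p),
      (∀ x, bilinAlpha p r hr c ξ g x = bilinAlpha p r hr c ξ x g) ↔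
      ((fun m : ∀ i : Fin t, ZMod (p ^ r i) => ∀ j, ∑ i, c i j * π i (m i) = 0) g.1 ∧
       (fun k : Fin s → ZMod p => ∀ i, ∑ j, c i j * k j = 0) g.2) := by
    intro g
    constructor
    · intro h
      constructor
      · intro j0
        have h1 := (key g (0, Pi.single j0 1)).mp (h _)
        simp only [Prod.fst, Pi.zero_apply, map_zero, mul_zero, zero_mul,
          Finset.sum_const_zero, Pi.single_apply, mul_ite, mul_one,
          Finset.sum_ite_eq', Finset.mem_univ, if_true] at h1
        exact h1.symm
      · intro i0
        have hsingle : ∀ x : Fin t,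
            π x (Pi.single (M := fun i => ZMod (p ^ r i)) i0 1 x) =
              if x = i0 then 1 else 0 := by
          intro x; rcases eq_or_ne x i0 with rfl | hne
          · simp
          · rw [Pi.single_eq_of_ne hne, map_zero, if_neg hne]
        have h1 := (key g (Pi.single i0 1, 0)).mp (h _)
        simp only [Pi.zero_apply, mul_zero, Finset.sum_const_zero, hsingle, mul_ite, mul_one,
          ite_mul, zero_mul, Finset.sum_ite_eq', Finset.mem_univ, if_true,
          ← Finset.sum_ite_irrel, Finset.sum_const_zero] at h1
        simpa using h1
    · rintro ⟨h1, h2⟩ x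
      rw [key]
      have e1 : (∑ i, ∑ j, c i j * π i (x.1 i) * g.2 j) = 0 := by
        have hi : ∀ i, ∑ j, c i j * π i (x.1 i) * g.2 j = π i (x.1 i) * ∑ j, c i j * g.2 j := by
          intro i; rw [Finset.mul_sum]; exact Finset.sum_congr rfl fun j _ => by ring
        simp [hi, h2]
      have e2 : (∑ i, ∑ j, c i j * π i (g.1 i) * x.2 j) = 0 := by
        rw [Finset.sum_comm]
        have hj : ∀ j, ∑ i, c i j * π i (g.1 i) * x.2 j = (∑ i, c i j * π i (g.1 i)) * x.2 j := by
          intro j; rw [Finset.sum_mul]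
        simp [hj, h1]
      rw [e1, e2]
  -- split the subtype as a product
  rw [Nat.card_congr ((Equiv.subtypeEquivRight hreg).trans
    (Equiv.subtypeProdEquivProd
      (p := fun m : ∀ i : Fin t, ZMod (p ^ r i) => ∀ j, ∑ i, c i j * π i (m i) = 0)
      (q := fun k : Fin s → ZMod p => ∀ i, ∑ j, c i j * k j = 0))),
    Nat.card_prod]
  -- count the k-side
  have hk : Nat.card {k : Fin s → ZMod p // ∀ i, ∑ j, c i j * k j = 0} *
      p ^ c.rank = p ^ s := by
    have he : {k : Fin s → ZMod p // ∀ i, ∑ j, c i j * k j = 0} ≃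
        LinearMap.ker c.mulVecLin :=
      Equiv.subtypeEquivRight (fun k => by
        simp [LinearMap.mem_ker, Matrix.mulVecLin_apply, Matrix.mulVec, dotProduct,
          funext_iff])
    haveI : Fintype (LinearMap.ker c.mulVecLin) := Fintype.ofFinite _
    rw [Nat.card_congr he, Nat.card_eq_fintype_card,
      card_eq_pow_finrank (K := ZMod p), ZMod.card, ← pow_add]
    have h2 := LinearMap.finrank_range_add_finrank_ker c.mulVecLin
    rw [Module.finrank_pi, Fintype.card_fin] at h2
    have h3 : c.rank = finrank (ZMod p) (LinearMap.range c.mulVecLin) := rfl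
    have h4 : finrank (ZMod p) ↥(LinearMap.ker c.mulVecLin) + c.rank = s := by
      rw [h3, Nat.add_comm]; exact h2
    rw [h4]
  -- count the v-side (image of the m-side under the projections)
  have hv : Nat.card {v : Fin t → ZMod p // ∀ j, ∑ i, c i j * v i = 0} *
      p ^ c.rank = p ^ t := by
    have he : {v : Fin t → ZMod p // ∀ j, ∑ i, c i j * v i = 0} ≃
        LinearMap.ker cᵀ.mulVecLin :=
      Equiv.subtypeEquivRight (fun v => by
        simp [LinearMap.mem_ker, Matrix.mulVecLin_apply, Matrix.mulVec, Matrix.vecMul,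
          dotProduct, funext_iff, Matrix.transpose_apply, mul_comm])
    haveI : Fintype (LinearMap.ker cᵀ.mulVecLin) := Fintype.ofFinite _
    rw [Nat.card_congr he, Nat.card_eq_fintype_card,
      card_eq_pow_finrank (K := ZMod p), ZMod.card, ← pow_add]
    have h2 := LinearMap.finrank_range_add_finrank_ker cᵀ.mulVecLin
    rw [Module.finrank_pi, Fintype.card_fin] at h2
    have h3 : cᵀ.rank = finrank (ZMod p) (LinearMap.range cᵀ.mulVecLin) := rfl
    have h4 : finrank (ZMod p) ↥(LinearMap.ker cᵀ.mulVecLin) + c.rank = t := by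
      rw [← Matrix.rank_transpose c, h3, Nat.add_comm]
      exact h2
    rw [h4]
  -- decompose the m-side
  have hm : Nat.card {m : ∀ i : Fin t, ZMod (p ^ r i) // ∀ j, ∑ i, c i j * π i (m i) = 0} =
      Nat.card {v : Fin t → ZMod p // ∀ j, ∑ i, c i j * v i = 0} *
        ∏ i, Nat.card {x : ZMod (p ^ r i) // π i x = 0} := by
    have e1 := Equiv.subtypeEquiv
      ((Equiv.piCongrRight (fun i => zmodSplitEquiv p (p ^ r i)
        (dvd_pow_self p (Nat.one_le_iff_ne_zero.mp (hr i))))).trans (piProdEquiv _ _))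
      (p := fun m => ∀ j, ∑ i, c i j * π i (m i) = 0)
      (q := fun q : (Fin t → ZMod p) × (∀ i : Fin t, {x : ZMod (p ^ r i) // π i x = 0}) =>
        ∀ j, ∑ i, c i j * q.1 i = 0) (fun m => Iff.rfl)
    have e2 := prodSubtypeFstEquiv (β := ∀ i : Fin t, {x : ZMod (p ^ r i) // π i x = 0})
      (fun v : Fin t → ZMod p => ∀ j, ∑ i, c i j * v i = 0)
    rw [Nat.card_congr (e1.trans e2), Nat.card_prod, Nat.card_pi]
  -- count each small kernel
  have hker : ∀ i : Fin t, Nat.card {x : ZMod (p ^ r i) // π i x = 0} * p = p ^ r i := by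
    intro i
    have h2 := Nat.card_congr (zmodSplitEquiv p (p ^ r i)
      (dvd_pow_self p (Nat.one_le_iff_ne_zero.mp (hr i))))
    rw [Nat.card_prod, Nat.card_zmod, Nat.card_zmod] at h2
    rw [mul_comm]
    exact h2.symm
  have hprodker : (∏ i, Nat.card {x : ZMod (p ^ r i) // π i x = 0}) * p ^ t = ∏ i, p ^ r i := by
    calc (∏ i, Nat.card {x : ZMod (p ^ r i) // π i x = 0}) * p ^ t
        = ∏ i : Fin t, (Nat.card {x : ZMod (p ^ r i) // π i x = 0} * p) := by
          rw [Finset.prod_mul_distrib, Finset.prod_const, Finset.card_univ, Fintype.card_fin]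
      _ = ∏ i, p ^ r i := Finset.prod_congr rfl fun i _ => hker i
  -- right-hand side
  rw [Nat.card_prod, Nat.card_pi]
  have hrhs : Nat.card (Fin s → ZMod p) = p ^ s := by
    rw [Nat.card_pi]
    simp [Nat.card_zmod]
  rw [hrhs, hm]
  simp only [Nat.card_zmod]
  -- final arithmetic
  calc Nat.card {v : Fin t → ZMod p // ∀ j, ∑ i, c i j * v i = 0} *
        (∏ i, Nat.card {x : ZMod (p ^ r i) // π i x = 0}) *
        Nat.card {k : Fin s → ZMod p // ∀ i, ∑ j, c i j * k j = 0} * p ^ (2 * c.rank)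
      = (Nat.card {v : Fin t → ZMod p // ∀ j, ∑ i, c i j * v i = 0} * p ^ c.rank) *
        (Nat.card {k : Fin s → ZMod p // ∀ i, ∑ j, c i j * k j = 0} * p ^ c.rank) *
        (∏ i, Nat.card {x : ZMod (p ^ r i) // π i x = 0}) := by
          rw [two_mul, pow_add]; ring
    _ = (∏ i, Nat.card {x : ZMod (p ^ r i) // π i x = 0}) * p ^ t * p ^ s := by
          rw [hv, hk]; ring
    _ = (∏ i, p ^ r i) * p ^ s := by rw [hprodker]
end

section
/- Every irreducible projective α-representation ρ of G on a nonzero finite-dimensional complex vector space V satisfies Module.finrank ℂ V = p ^ c.rank. In particular all irreducible projective α-representations of G have the same dimension, and this dimension is at most p^(min s t). -/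
/-- abbreviation for the group underlying everything -/
abbrev PG (p t s : ℕ) (r : Fin t → ℕ) : Type :=
  (∀ i : Fin t, ZMod (p ^ r i)) × (Fin s → ZMod p)

/-- the `ZMod p`-valued bilinear form underlying `bilinAlpha` -/
def eForm (p : ℕ) {t s : ℕ} (r : Fin t → ℕ) (hr : ∀ i, 1 ≤ r i)
    (c : Matrix (Fin t) (Fin s) (ZMod p))
    (g h : PG p t s r) : ZMod p :=
  ∑ i, ∑ j, c i j *
      ZMod.castHom (dvd_pow_self p (Nat.one_le_iff_ne_zero.mp (hr i))) (ZMod p) (h.1 i) *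
      g.2 j

lemma bilinAlpha_eq_eForm (p : ℕ) {t s : ℕ} (r : Fin t → ℕ) (hr : ∀ i, 1 ≤ r i)
    (c : Matrix (Fin t) (Fin s) (ZMod p)) (ξ : ℂˣ) (g h : PG p t s r) :
    bilinAlpha p r hr c ξ g h = ξ ^ (eForm p r hr c g h).val := rfl

lemma eForm_neg (p : ℕ) {t s : ℕ} (r : Fin t → ℕ) (hr : ∀ i, 1 ≤ r i)
    (c : Matrix (Fin t) (Fin s) (ZMod p)) (g : PG p t s r) :
    eForm p r hr c g (-g) = eForm p r hr c (-g) g := by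
  unfold eForm
  simp only [Prod.fst_neg, Prod.snd_neg, Pi.neg_apply, map_neg, mul_neg, neg_mul]

lemma chi_mul {p : ℕ} [NeZero p] {ξ : ℂˣ} (h1 : ξ ^ p = 1) (a b : ZMod p) :
    ξ ^ (a + b).val = ξ ^ a.val * ξ ^ b.val := by
  rw [ZMod.val_add, ← pow_add]
  conv_rhs => rw [← Nat.div_add_mod (a.val + b.val) p]
  rw [pow_add, pow_mul, h1, one_pow, one_mul]

lemma chi_inj {p : ℕ} [NeZero p] {ξ : ℂˣ} (hξ : IsPrimitiveRoot ξ p) {a b : ZMod p}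
    (h : ξ ^ a.val = ξ ^ b.val) : a = b := by
  have h1 : ξ ^ p = 1 := hξ.pow_eq_one
  have h2 : ξ ^ (a - b).val * ξ ^ b.val = ξ ^ a.val := by
    rw [← chi_mul h1, sub_add_cancel]
  have h3 : ξ ^ (a - b).val = 1 :=
    mul_right_cancel (h2.trans (h.trans (one_mul (ξ ^ b.val)).symm))
  by_contra hne
  have hval : (a - b).val < p := ZMod.val_lt _
  have hpos : 0 < (a - b).val := by
    rcases Nat.eq_zero_or_pos (a - b).val with h' | h'
    · exact absurd (sub_eq_zero.mp ((ZMod.val_eq_zero _).mp h')) hne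
    · exact h'
  exact hξ.pow_ne_one_of_pos_of_lt hpos.ne' hval h3


open LinearMap

/-- The linear equivalence between square matrices and functions on pairs. -/
def matFunEquiv (K : Type) [Field K] (n : ℕ) :
    Matrix (Fin n) (Fin n) K ≃ₗ[K] (Fin n × Fin n → K) where
  toFun M q := M q.1 q.2
  invFun x := Matrix.of fun i j => x (i, j)
  map_add' _ _ := rfl
  map_smul' _ _ := rfl
  left_inv _ := rfl
  right_inv _ := rfl

lemma trace_superop_matrix {K : Type} [Field K] {n : ℕ}
    (Ψ : Matrix (Fin n) (Fin n) K →ₗ[K] Matrix (Fin n) (Fin n) K) :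
    trace K _ Ψ = ∑ q : Fin n × Fin n,
      Ψ ((matFunEquiv K n).symm (Pi.single q 1)) q.1 q.2 := by
  rw [← LinearMap.trace_conj' Ψ (matFunEquiv K n),
    LinearMap.trace_eq_matrix_trace K (Pi.basisFun K (Fin n × Fin n))]
  rw [Matrix.trace]
  refine Finset.sum_congr rfl fun q _ => ?_
  rw [Matrix.diag]
  rw [LinearMap.toMatrix_apply]
  simp [LinearEquiv.conj_apply, matFunEquiv]
  rfl

lemma trace_conjOp_matrix {K : Type} [Field K] {n : ℕ} (A C : Matrix (Fin n) (Fin n) K) :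
    trace K _ ((LinearMap.mulLeft K A) ∘ₗ (LinearMap.mulRight K C)) = A.trace * C.trace := by
  rw [trace_superop_matrix]
  have key : ∀ q : Fin n × Fin n,
      (((LinearMap.mulLeft K A) ∘ₗ (LinearMap.mulRight K C))
        ((matFunEquiv K n).symm (Pi.single q 1))) q.1 q.2 = A q.1 q.1 * C q.2 q.2 := by
    rintro ⟨k, l⟩
    simp only [LinearMap.comp_apply, LinearMap.mulLeft_apply, LinearMap.mulRight_apply]
    have hE : ((matFunEquiv K n).symm (Pi.single (k, l) (1:K))) =
        Matrix.single k l (1:K) := by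
      ext i j
      change (Pi.single (k, l) (1:K) : Fin n × Fin n → K) (i, j) = _
      simp only [matFunEquiv, Matrix.single, Pi.single_apply, Prod.ext_iff,
        LinearEquiv.coe_symm_mk, Matrix.of_apply]
      aesop
    rw [hE, Matrix.mul_apply]
    rw [Finset.sum_eq_single k (fun x _ hx => by
      rw [Matrix.single_mul_apply_of_ne _ _ _ _ _ hx, mul_zero]) (by simp)]
    rw [Matrix.single_mul_apply_same, one_mul]
  rw [Finset.sum_congr rfl (fun q _ => key q)]
  rw [Fintype.sum_prod_type]
  rw [Matrix.trace, Matrix.trace, Finset.sum_mul_sum]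
  simp [Matrix.diag]

lemma trace_traceOne_matrix {K : Type} [Field K] {n : ℕ} :
    trace K _ ((LinearMap.smulRight (Matrix.traceLinearMap (Fin n) K K)
      (1 : Matrix (Fin n) (Fin n) K))) = (n : K) := by
  rw [trace_superop_matrix]
  have key : ∀ q : Fin n × Fin n,
      ((LinearMap.smulRight (Matrix.traceLinearMap (Fin n) K K) (1 : Matrix (Fin n) (Fin n) K))
        ((matFunEquiv K n).symm (Pi.single q 1))) q.1 q.2
      = if q.1 = q.2 then (if q.2 = q.1 then (1:K) else 0) else 0 := by
    rintro ⟨k, l⟩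
    have hE : ((matFunEquiv K n).symm (Pi.single (k, l) (1:K))) =
        Matrix.single k l (1:K) := by
      ext i j
      change (Pi.single (k, l) (1:K) : Fin n × Fin n → K) (i, j) = _
      simp only [matFunEquiv, Matrix.single, Pi.single_apply, Prod.ext_iff,
        LinearEquiv.coe_symm_mk, Matrix.of_apply]
      aesop
    simp only [LinearMap.smulRight_apply, hE, Matrix.traceLinearMap_apply]
    have : (Matrix.single k l (1:K)).trace = if k = l then 1 else 0 := by
      by_cases h : k = l
      · subst h
        simp [Matrix.trace, Matrix.diag, Matrix.single]
      · rw [if_neg h, Matrix.trace]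
        exact Finset.sum_eq_zero fun x _ =>
          Matrix.single_apply_of_ne _ _ _ _ _ (fun hc => h (hc.1.trans hc.2.symm))
    rw [this]
    by_cases h : k = l <;> simp [h, Matrix.one_apply]
  rw [Finset.sum_congr rfl (fun q _ => key q), Fintype.sum_prod_type]
  simp

lemma trace_conjOp_end {K V : Type} [Field K] [AddCommGroup V] [Module K V]
    [FiniteDimensional K V] (X Y : Module.End K V) :
    trace K (Module.End K V) ((LinearMap.mulLeft K X) ∘ₗ (LinearMap.mulRight K Y))
      = trace K V X * trace K V Y := by
  classical
  set b := Module.finBasis K V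
  set e := (LinearMap.toMatrixAlgEquiv b).toLinearEquiv
  have h1 : e.conj ((LinearMap.mulLeft K X) ∘ₗ (LinearMap.mulRight K Y))
      = (LinearMap.mulLeft K (LinearMap.toMatrix b b X)) ∘ₗ
        (LinearMap.mulRight K (LinearMap.toMatrix b b Y)) := by
    apply LinearMap.ext; intro M
    simp only [LinearEquiv.conj_apply, LinearMap.comp_apply, LinearMap.mulLeft_apply,
      LinearMap.mulRight_apply]
    show (LinearMap.toMatrixAlgEquiv b) (X * ((LinearMap.toMatrixAlgEquiv b).symm M * Y))
      = LinearMap.toMatrix b b X * (M * LinearMap.toMatrix b b Y)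
    rw [map_mul, map_mul, AlgEquiv.apply_symm_apply]
    rfl
  rw [← LinearMap.trace_conj' ((LinearMap.mulLeft K X) ∘ₗ (LinearMap.mulRight K Y)) e, h1,
    trace_conjOp_matrix, LinearMap.trace_eq_matrix_trace K b X,
    LinearMap.trace_eq_matrix_trace K b Y]

lemma trace_traceOne_end {K V : Type} [Field K] [AddCommGroup V] [Module K V]
    [FiniteDimensional K V] :
    trace K (Module.End K V) (LinearMap.smulRight (trace K V) (1 : Module.End K V))
      = (Module.finrank K V : K) := by
  classical
  set b := Module.finBasis K V
  set e := (LinearMap.toMatrixAlgEquiv b).toLinearEquiv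
  have h1 : e.conj (LinearMap.smulRight (trace K V) (1 : Module.End K V))
      = LinearMap.smulRight (Matrix.traceLinearMap (Fin (Module.finrank K V)) K K)
          (1 : Matrix (Fin (Module.finrank K V)) (Fin (Module.finrank K V)) K) := by
    apply LinearMap.ext; intro M
    simp only [LinearEquiv.conj_apply, LinearMap.comp_apply, LinearMap.smulRight_apply,
      Matrix.traceLinearMap_apply]
    show (LinearMap.toMatrixAlgEquiv b)
        ((trace K V ((LinearMap.toMatrixAlgEquiv b).symm M)) • 1) = Matrix.trace M • 1
    rw [map_smul, map_one]
    congr 1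
    rw [LinearMap.trace_eq_matrix_trace K b]
    congr 1
    show ((LinearMap.toMatrixAlgEquiv b) ((LinearMap.toMatrixAlgEquiv b).symm M)) = M
    rw [AlgEquiv.apply_symm_apply]
  rw [← LinearMap.trace_conj' _ e, h1, trace_traceOne_matrix]

lemma eForm_radical_iff (p : ℕ) {t s : ℕ} (r : Fin t → ℕ) (hr : ∀ i, 1 ≤ r i)
    (c : Matrix (Fin t) (Fin s) (ZMod p)) (x : PG p t s r) :
    (∀ g, eForm p r hr c g x = eForm p r hr c x g) ↔
      (Matrix.vecMul (fun i =>
          ZMod.castHom (dvd_pow_self p (Nat.one_le_iff_ne_zero.mp (hr i))) (ZMod p) (x.1 i)) c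
        = 0 ∧ c.mulVec x.2 = 0) := by
  classical
  set π := fun i => ZMod.castHom (dvd_pow_self p (Nat.one_le_iff_ne_zero.mp (hr i))) (ZMod p)
  constructor
  · intro hx
    constructor
    · funext j₀
      have h1 := hx (0, Pi.single j₀ 1)
      have h2 : eForm p r hr c (0, Pi.single j₀ 1) x = ∑ i, c i j₀ * π i (x.1 i) := by
        unfold eForm
        simp [Pi.single_apply, mul_ite, Finset.sum_ite_eq']
        exact Finset.sum_congr rfl fun i _ => rfl
      have h3 : eForm p r hr c x (0, Pi.single j₀ 1) = 0 := by
        unfold eForm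
        simp
      rw [h2, h3] at h1
      simp only [Matrix.vecMul, dotProduct, Pi.zero_apply]
      rw [← h1]
      exact Finset.sum_congr rfl fun i _ => mul_comm _ _
    · funext i₀
      have h1 := hx (Pi.single i₀ 1, 0)
      have h2 : eForm p r hr c (Pi.single i₀ 1, 0) x = 0 := by
        unfold eForm
        simp
      have h3 : eForm p r hr c x (Pi.single i₀ 1, 0) = ∑ j, c i₀ j * x.2 j := by
        unfold eForm
        rw [Finset.sum_comm]
        refine Finset.sum_congr rfl fun j _ => ?_
        rw [Finset.sum_eq_single i₀ (fun i _ hi => by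
          rw [show ((Pi.single i₀ 1, (0 : Fin s → ZMod p)).1 i) = 0 from Pi.single_eq_of_ne hi _,
            map_zero, mul_zero, zero_mul]) (by simp)]
        rw [show ((Pi.single i₀ 1, (0 : Fin s → ZMod p)).1 i₀) = 1 from Pi.single_eq_same _ _,
          map_one, mul_one]
      rw [h2, h3] at h1
      simp only [Matrix.mulVec, dotProduct, Pi.zero_apply]
      exact h1.symm
  · rintro ⟨hv, hm⟩ g
    have h1 : eForm p r hr c g x = 0 := by
      unfold eForm
      rw [Finset.sum_comm]
      rw [Finset.sum_congr rfl (fun j _ => ?_), Finset.sum_const_zero]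
      have : (Matrix.vecMul (fun i => π i (x.1 i)) c) j = 0 := by rw [hv]; rfl
      simp only [Matrix.vecMul, dotProduct] at this
      rw [← Finset.sum_mul]
      rw [Finset.sum_congr rfl (fun i _ => mul_comm (c i j) (π i (x.1 i)))] at *
      rw [this, zero_mul]
    have h2 : eForm p r hr c x g = 0 := by
      unfold eForm
      rw [Finset.sum_congr rfl (fun i _ => ?_), Finset.sum_const_zero]
      have : (c.mulVec x.2) i = 0 := by rw [hm]; rfl
      simp only [Matrix.mulVec, dotProduct] at this
      calc ∑ j, c i j * π i (g.1 i) * x.2 j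
          = π i (g.1 i) * ∑ j, c i j * x.2 j := by
            rw [Finset.mul_sum]
            exact Finset.sum_congr rfl fun j _ => by ring
        _ = 0 := by rw [this, mul_zero]
    rw [h1, h2]


lemma card_ker_mulVec (p : ℕ) [Fact p.Prime] {s t : ℕ} (c : Matrix (Fin t) (Fin s) (ZMod p)) :
    p ^ c.rank * Nat.card {k : Fin s → ZMod p | c.mulVec k = 0} = p ^ s := by
  classical
  haveI : NeZero p := ⟨(Fact.out : p.Prime).ne_zero⟩
  set W := LinearMap.ker c.mulVecLin with hW
  have hset : {k : Fin s → ZMod p | c.mulVec k = 0} = (W : Set (Fin s → ZMod p)) := by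
    ext k
    simp [hW, LinearMap.mem_ker]
  rw [hset]
  have h1 : Nat.card (W : Set (Fin s → ZMod p)) = p ^ Module.finrank (ZMod p) W := by
    haveI : Fintype W := Fintype.ofFinite W
    rw [show ((W : Set (Fin s → ZMod p))) = (SetLike.coe W) from rfl]
    rw [Nat.card_eq_fintype_card]
    rw [show (Fintype.card (W : Set (Fin s → ZMod p))) = Fintype.card W from rfl]
    rw [Module.card_eq_pow_finrank (K := ZMod p) (V := W), ZMod.card]
  rw [h1, ← pow_add]
  congr 1
  have h2 := LinearMap.finrank_range_add_finrank_ker c.mulVecLin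
  rw [Module.finrank_pi, Fintype.card_fin] at h2
  rw [Matrix.rank]
  exact h2

lemma card_ker_vecMulPi (p : ℕ) [Fact p.Prime] {s t : ℕ} (r : Fin t → ℕ) (hr : ∀ i, 1 ≤ r i)
    (c : Matrix (Fin t) (Fin s) (ZMod p)) :
    p ^ c.rank * Nat.card {m : ∀ i : Fin t, ZMod (p ^ r i) |
        Matrix.vecMul (fun i => ZMod.castHom (dvd_pow_self p (Nat.one_le_iff_ne_zero.mp (hr i)))
          (ZMod p) (m i)) c = 0}
      = Nat.card (∀ i : Fin t, ZMod (p ^ r i)) := by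
  classical
  haveI : NeZero p := ⟨(Fact.out : p.Prime).ne_zero⟩
  haveI : ∀ i, NeZero (p ^ r i) := fun i => ⟨pow_ne_zero _ (Fact.out : p.Prime).ne_zero⟩
  set π := fun i => ZMod.castHom (dvd_pow_self p (Nat.one_le_iff_ne_zero.mp (hr i))) (ZMod p)
    with hπ
  have hadd : ∀ m m' : ∀ i : Fin t, ZMod (p ^ r i),
      Matrix.vecMul (fun i => π i ((m + m') i)) c
        = Matrix.vecMul (fun i => π i (m i)) c + Matrix.vecMul (fun i => π i (m' i)) c := by
    intro m m'
    rw [show (fun i => π i ((m + m') i)) = (fun i => π i (m i)) + (fun i => π i (m' i)) by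
      funext i; simp [map_add]]
    rw [Matrix.add_vecMul]
  set F : (∀ i : Fin t, ZMod (p ^ r i)) →+ (Fin s → ZMod p) :=
    AddMonoidHom.mk' (fun m => Matrix.vecMul (fun i => π i (m i)) c) hadd with hF
  have hcard := AddSubgroup.card_eq_card_quotient_mul_card_addSubgroup F.ker
  have hquot : Nat.card ((∀ i : Fin t, ZMod (p ^ r i)) ⧸ F.ker) = Nat.card F.range :=
    Nat.card_congr (QuotientAddGroup.quotientKerEquivRange F).toEquiv
  have hrangeset : (F.range : Set (Fin s → ZMod p))
      = (LinearMap.range (Matrix.vecMulLinear c) : Set (Fin s → ZMod p)) := by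
    ext y
    constructor
    · rintro ⟨m, rfl⟩
      exact ⟨fun i => π i (m i), rfl⟩
    · rintro ⟨v, rfl⟩
      refine ⟨fun i => ((v i).val : ZMod (p ^ r i)), ?_⟩
      show Matrix.vecMul (fun i => π i (((v i).val : ZMod (p ^ r i)))) c
        = Matrix.vecMulLinear c v
      have hv : (fun i => π i (((v i).val : ZMod (p ^ r i)))) = v := by
        funext i
        rw [map_natCast]
        exact ZMod.natCast_rightInverse (v i)
      rw [Matrix.vecMulLinear_apply, hv]
  have hrange : Nat.card F.range = p ^ c.rank := by
    have : Nat.card F.range = Nat.card (LinearMap.range (Matrix.vecMulLinear c)) :=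
      Nat.card_congr (Equiv.setCongr hrangeset)
    rw [this]
    haveI : Fintype (LinearMap.range (Matrix.vecMulLinear c)) := Fintype.ofFinite _
    rw [Nat.card_eq_fintype_card, Module.card_eq_pow_finrank (K := ZMod p), ZMod.card]
    congr 1
    rw [← Matrix.mulVecLin_transpose]
    rw [show Module.finrank (ZMod p)
        (LinearMap.range (Matrix.mulVecLin (Matrix.transpose c))) = (Matrix.transpose c).rank
      from rfl]
    rw [Matrix.rank_transpose]
  have hkerset : {m : ∀ i : Fin t, ZMod (p ^ r i) |
      Matrix.vecMul (fun i =>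
        ZMod.castHom (dvd_pow_self p (Nat.one_le_iff_ne_zero.mp (hr i)))
          (ZMod p) (m i)) c = 0} = (F.ker : Set _) := by
    ext m
    simp [hF, AddMonoidHom.mem_ker]
    rfl
  rw [hkerset]
  have : Nat.card ((F.ker : Set (∀ i : Fin t, ZMod (p ^ r i)))) = Nat.card F.ker :=
    Nat.card_congr (Equiv.setCongr rfl)
  rw [this, hcard, hquot, hrange]

theorem finrank_of_irreducible_projective_rep (p t s : ℕ) (hp : p.Prime) (ht : 1 ≤ t) (hs : 1 ≤ s)
    (r : Fin t → ℕ) (hr : ∀ i, 1 ≤ r i)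
    (c : Matrix (Fin t) (Fin s) (ZMod p)) (ξ : ℂˣ) (hξ : IsPrimitiveRoot ξ p)
    (V : Type) [AddCommGroup V] [Module ℂ V] [FiniteDimensional ℂ V] [Nontrivial V]
    (ρ : ((∀ i : Fin t, ZMod (p ^ r i)) × (Fin s → ZMod p)) → (V →ₗ[ℂ] V))
    (hρ0 : ρ 0 = LinearMap.id)
    (hρ : ∀ g h, ρ g ∘ₗ ρ h = (bilinAlpha p r hr c ξ g h : ℂ) • ρ (g + h))
    (hirr : ∀ W : Submodule ℂ V,
      (∀ g, (ρ g) '' (W : Set V) ⊆ (W : Set V)) → W = ⊥ ∨ W = ⊤) :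
    Module.finrank ℂ V = p ^ c.rank ∧ Module.finrank ℂ V ≤ p ^ (min s t) := by
  classical
  haveI : Fact p.Prime := ⟨hp⟩
  haveI : NeZero p := ⟨hp.ne_zero⟩
  haveI hNZ : ∀ i, NeZero (p ^ r i) := fun i => ⟨pow_ne_zero _ hp.ne_zero⟩
  set d := Module.finrank ℂ V with hd
  have hdpos : 0 < d := Module.finrank_pos
  have hdC : (d : ℂ) ≠ 0 := Nat.cast_ne_zero.mpr hdpos.ne'
  have hξ1 : ξ ^ p = 1 := hξ.pow_eq_one
  -- basic multiplicative relation, in `Module.End ℂ V`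
  have key : ∀ g h : PG p t s r,
      ρ g * ρ h = ((ξ ^ (eForm p r hr c g h).val : ℂˣ) : ℂ) • ρ (g + h) := by
    intro g h
    rw [Module.End.mul_eq_comp, hρ g h, bilinAlpha_eq_eForm]
  have hone : ρ 0 = (1 : Module.End ℂ V) := by rw [hρ0]; rfl
  -- each ρ g is invertible
  have hval : ∀ g : PG p t s r,
      ρ g * ((((ξ ^ (eForm p r hr c g (-g)).val : ℂˣ)⁻¹ : ℂˣ) : ℂ) • ρ (-g)) = 1 := by
    intro g
    rw [mul_smul_comm, key g (-g), smul_smul, add_neg_cancel, hone, Units.inv_mul, one_smul]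
  have hval' : ∀ g : PG p t s r,
      (((((ξ ^ (eForm p r hr c g (-g)).val : ℂˣ)⁻¹ : ℂˣ) : ℂ) • ρ (-g))) * ρ g = 1 := by
    intro g
    rw [smul_mul_assoc, key (-g) g, smul_smul, neg_add_cancel, hone,
      ← eForm_neg p r hr c g, Units.inv_mul, one_smul]
  set u : PG p t s r → (Module.End ℂ V)ˣ := fun g =>
    ⟨ρ g, (((ξ ^ (eForm p r hr c g (-g)).val : ℂˣ)⁻¹ : ℂˣ) : ℂ) • ρ (-g), hval g, hval' g⟩
    with hu
  have huval : ∀ g, ((u g : (Module.End ℂ V)ˣ) : Module.End ℂ V) = ρ g := fun g => rfl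
  set z : ℂˣ →* (Module.End ℂ V)ˣ :=
    Units.map (algebraMap ℂ (Module.End ℂ V)).toMonoidHom with hz
  have hzval : ∀ a : ℂˣ, ((z a : (Module.End ℂ V)ˣ) : Module.End ℂ V)
      = (a : ℂ) • (1 : Module.End ℂ V) := by
    intro a
    show algebraMap ℂ (Module.End ℂ V) (a : ℂ) = _
    rw [Algebra.algebraMap_eq_smul_one]
  have humul : ∀ g h : PG p t s r,
      u g * u h = z (ξ ^ (eForm p r hr c g h).val) * u (g + h) := by
    intro g h
    apply Units.ext
    show ρ g * ρ h = ((z (ξ ^ (eForm p r hr c g h).val) * u (g + h) :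
      (Module.End ℂ V)ˣ) : Module.End ℂ V)
    rw [Units.val_mul, hzval, huval, key, smul_mul_assoc, one_mul]
  -- Schur's lemma
  have schur : ∀ T : Module.End ℂ V, (∀ g : PG p t s r, ρ g * T = T * ρ g) →
      ∃ ν : ℂ, T = ν • (1 : Module.End ℂ V) := by
    intro T hT
    obtain ⟨ν, hν⟩ := Module.End.exists_eigenvalue T
    refine ⟨ν, ?_⟩
    have hinvar : ∀ g, (ρ g) '' ((T.eigenspace ν : Submodule ℂ V) : Set V)
        ⊆ ((T.eigenspace ν : Submodule ℂ V) : Set V) := by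
      intro g y hy
      obtain ⟨x, hx, rfl⟩ := hy
      rw [SetLike.mem_coe, Module.End.mem_eigenspace_iff] at hx ⊢
      have hcg := congrArg (fun f : Module.End ℂ V => f x) (hT g)
      simp only [Module.End.mul_apply] at hcg
      rw [← hcg, hx, map_smul]
    rcases hirr _ hinvar with hbot | htop
    · exact absurd hbot hν
    · apply LinearMap.ext
      intro x
      have hx : x ∈ T.eigenspace ν := htop ▸ Submodule.mem_top
      rw [Module.End.mem_eigenspace_iff] at hx
      simpa using hx
  -- the radical H
  set H : Set (PG p t s r) :=
    {x | ∀ g, eForm p r hr c g x = eForm p r hr c x g} with hH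
  have hscal : ∀ x ∈ H, ∃ ν : ℂ, ρ x = ν • (1 : Module.End ℂ V) := by
    intro x hx
    apply schur
    intro g
    rw [key g x, key x g, hx g, add_comm g x]
  choose μ hμ using hscal
  have hμ0 : ∀ x (hx : x ∈ H), μ x hx ≠ 0 := by
    intro x hx h0
    obtain ⟨v0, hv0⟩ := exists_ne (0 : V)
    have h1 := Units.mul_inv (u x)
    rw [huval, hμ x hx, h0, zero_smul, zero_mul] at h1
    have h2 := congrArg (fun f : Module.End ℂ V => f v0) h1
    simp only [LinearMap.zero_apply, Module.End.one_apply] at h2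
    exact hv0 h2.symm
  have hinvscal : ∀ x (hx : x ∈ H),
      (((u x)⁻¹ : (Module.End ℂ V)ˣ) : Module.End ℂ V)
        = (μ x hx)⁻¹ • (1 : Module.End ℂ V) := by
    intro x hx
    have h1 := Units.inv_mul (u x)
    rw [huval, hμ x hx, mul_smul_comm, mul_one] at h1
    exact ((inv_smul_eq_iff₀ (hμ0 x hx)).mpr h1.symm).symm
  have trH : ∀ x (hx : x ∈ H), LinearMap.trace ℂ V (ρ x) = μ x hx * (d : ℂ) := by
    intro x hx
    rw [hμ x hx, map_smul, LinearMap.trace_one, smul_eq_mul, hd]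
  have trHinv : ∀ x (hx : x ∈ H),
      LinearMap.trace ℂ V (((u x)⁻¹ : (Module.End ℂ V)ˣ) : Module.End ℂ V)
        = (μ x hx)⁻¹ * (d : ℂ) := by
    intro x hx
    rw [hinvscal x hx, map_smul, LinearMap.trace_one, smul_eq_mul, hd]
  have trNH : ∀ x, x ∉ H → LinearMap.trace ℂ V (ρ x) = 0 := by
    intro x hx
    rw [hH, Set.mem_setOf_eq, not_forall] at hx
    obtain ⟨g, hg⟩ := hx
    have r1 := humul g x
    have r2 := humul x g
    rw [add_comm x g] at r2
    have r3 : u g * u x = z (ξ ^ (eForm p r hr c g x).val) *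
        ((z (ξ ^ (eForm p r hr c x g).val))⁻¹ * (u x * u g)) := by
      rw [r2, inv_mul_cancel_left]
      exact r1
    have r4 : u g * u x * (u g)⁻¹ = z (ξ ^ (eForm p r hr c g x).val) *
        (z (ξ ^ (eForm p r hr c x g).val))⁻¹ * u x := by
      rw [r3]
      group
    have lhs : LinearMap.trace ℂ V ((u g * u x * (u g)⁻¹ : (Module.End ℂ V)ˣ) :
        Module.End ℂ V) = LinearMap.trace ℂ V (ρ x) := by
      rw [Units.val_mul, Units.val_mul, huval, huval]
      exact LinearMap.trace_conj ℂ (ρ x) (u g)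
    have rhs : LinearMap.trace ℂ V
        ((z (ξ ^ (eForm p r hr c g x).val) * (z (ξ ^ (eForm p r hr c x g).val))⁻¹ * u x :
          (Module.End ℂ V)ˣ) : Module.End ℂ V)
        = ((ξ ^ (eForm p r hr c g x).val : ℂˣ) : ℂ) *
          (((ξ ^ (eForm p r hr c x g).val : ℂˣ)⁻¹ : ℂˣ) : ℂ) * LinearMap.trace ℂ V (ρ x) := by
      rw [Units.val_mul, Units.val_mul, ← map_inv, hzval, hzval, huval]
      simp only [smul_mul_assoc, one_mul, map_smul, smul_eq_mul]
      ring
    have r5 : LinearMap.trace ℂ V (ρ x)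
        = ((ξ ^ (eForm p r hr c g x).val : ℂˣ) : ℂ) *
          (((ξ ^ (eForm p r hr c x g).val : ℂˣ)⁻¹ : ℂˣ) : ℂ) * LinearMap.trace ℂ V (ρ x) := by
      conv_lhs => rw [← lhs, r4]
      exact rhs
    set q : ℂ := ((ξ ^ (eForm p r hr c g x).val : ℂˣ) : ℂ) *
          (((ξ ^ (eForm p r hr c x g).val : ℂˣ)⁻¹ : ℂˣ) : ℂ) with hq
    have hq1 : q ≠ 1 := by
      intro hq1
      apply hg
      apply chi_inj hξ
      have : ((ξ ^ (eForm p r hr c g x).val : ℂˣ) : ℂ)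
          = ((ξ ^ (eForm p r hr c x g).val : ℂˣ) : ℂ) := by
        have h2 := congrArg (fun w => w * ((ξ ^ (eForm p r hr c x g).val : ℂˣ) : ℂ)) hq1
        simp only [hq, one_mul] at h2
        rw [mul_assoc, Units.inv_mul, mul_one] at h2
        exact h2
      exact Units.ext this
    have := sub_eq_zero.mpr r5.symm
    rw [show q * LinearMap.trace ℂ V (ρ x) - LinearMap.trace ℂ V (ρ x)
        = (q - 1) * LinearMap.trace ℂ V (ρ x) from by ring] at this
    rcases mul_eq_zero.mp this with h' | h'
    · exact absurd (sub_eq_zero.mp h') hq1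
    · exact h'
  -- the averaging operator
  set Φ : Module.End ℂ V →ₗ[ℂ] Module.End ℂ V :=
    ∑ g : PG p t s r, (LinearMap.mulLeft ℂ (ρ g)) ∘ₗ
      (LinearMap.mulRight ℂ (((u g)⁻¹ : (Module.End ℂ V)ˣ) : Module.End ℂ V)) with hΦ
  have hΦap : ∀ B, Φ B = ∑ g : PG p t s r,
      ρ g * B * (((u g)⁻¹ : (Module.End ℂ V)ˣ) : Module.End ℂ V) := by
    intro B
    rw [hΦ, LinearMap.sum_apply]
    exact Finset.sum_congr rfl fun g _ => by
      simp only [LinearMap.comp_apply, LinearMap.mulLeft_apply, LinearMap.mulRight_apply,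
        mul_assoc]
  have hterm : ∀ (h₀ : PG p t s r) (B : Module.End ℂ V) (g : PG p t s r),
      ρ h₀ * (ρ g * B * (((u g)⁻¹ : (Module.End ℂ V)ˣ) : Module.End ℂ V)) *
          (((u h₀)⁻¹ : (Module.End ℂ V)ˣ) : Module.End ℂ V)
        = ρ (h₀ + g) * B * (((u (h₀ + g))⁻¹ : (Module.End ℂ V)ˣ) : Module.End ℂ V) := by
    intro h₀ B g
    have e1 : ρ h₀ * (ρ g * B * (((u g)⁻¹ : (Module.End ℂ V)ˣ) : Module.End ℂ V)) *
          (((u h₀)⁻¹ : (Module.End ℂ V)ˣ) : Module.End ℂ V)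
        = ((u h₀ * u g : (Module.End ℂ V)ˣ) : Module.End ℂ V) * B *
          (((u h₀ * u g)⁻¹ : (Module.End ℂ V)ˣ) : Module.End ℂ V) := by
      simp only [mul_inv_rev, Units.val_mul, huval, mul_assoc]
    rw [e1, humul h₀ g]
    -- scalar conjugation disappears
    have hcancel : (((ξ ^ (eForm p r hr c h₀ g).val : ℂˣ) : ℂ)) *
        (((ξ ^ (eForm p r hr c h₀ g).val : ℂˣ)⁻¹ : ℂˣ) : ℂ) = 1 := Units.mul_inv _
    have hcancel' : (((ξ ^ (eForm p r hr c h₀ g).val : ℂˣ)⁻¹ : ℂˣ) : ℂ) *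
        (((ξ ^ (eForm p r hr c h₀ g).val : ℂˣ) : ℂ)) = 1 := Units.inv_mul _
    rw [mul_inv_rev, ← map_inv]
    simp only [Units.val_mul, hzval, huval, smul_mul_assoc, mul_smul_comm, one_mul, mul_one,
      smul_smul, mul_assoc, hcancel, hcancel', one_smul]
  have hΦcomm : ∀ (B : Module.End ℂ V) (h₀ : PG p t s r), ρ h₀ * Φ B = Φ B * ρ h₀ := by
    intro B h₀
    have hst : ∀ g : PG p t s r,
        ((u h₀ : (Module.End ℂ V)ˣ) : Module.End ℂ V) *
            (ρ g * B * (((u g)⁻¹ : (Module.End ℂ V)ˣ) : Module.End ℂ V)) *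
            (((u h₀)⁻¹ : (Module.End ℂ V)ˣ) : Module.End ℂ V)
          = ρ (h₀ + g) * B * (((u (h₀ + g))⁻¹ : (Module.End ℂ V)ˣ) : Module.End ℂ V) := by
      intro g
      rw [huval]
      exact hterm h₀ B g
    have h1 : ((u h₀ : (Module.End ℂ V)ˣ) : Module.End ℂ V) * Φ B *
        (((u h₀)⁻¹ : (Module.End ℂ V)ˣ) : Module.End ℂ V) = Φ B := by
      calc ((u h₀ : (Module.End ℂ V)ˣ) : Module.End ℂ V) * Φ B *
          (((u h₀)⁻¹ : (Module.End ℂ V)ˣ) : Module.End ℂ V)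
          = ∑ g : PG p t s r, ((u h₀ : (Module.End ℂ V)ˣ) : Module.End ℂ V) *
              (ρ g * B * (((u g)⁻¹ : (Module.End ℂ V)ˣ) : Module.End ℂ V)) *
              (((u h₀)⁻¹ : (Module.End ℂ V)ˣ) : Module.End ℂ V) := by
            rw [hΦap, Finset.mul_sum, Finset.sum_mul]
        _ = ∑ g : PG p t s r,
              ρ (h₀ + g) * B * (((u (h₀ + g))⁻¹ : (Module.End ℂ V)ˣ) : Module.End ℂ V) :=
            Finset.sum_congr rfl (fun g _ => hst g)
        _ = ∑ g : PG p t s r, ρ g * B * (((u g)⁻¹ : (Module.End ℂ V)ˣ) : Module.End ℂ V) :=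
            Fintype.sum_equiv (Equiv.addLeft h₀) _ _ (fun g => rfl)
        _ = Φ B := (hΦap B).symm
    calc ρ h₀ * Φ B
        = ((u h₀ : (Module.End ℂ V)ˣ) : Module.End ℂ V) * Φ B *
          ((((u h₀)⁻¹ : (Module.End ℂ V)ˣ) : Module.End ℂ V) *
            ((u h₀ : (Module.End ℂ V)ˣ) : Module.End ℂ V)) := by
          rw [Units.inv_mul, mul_one, huval]
      _ = (((u h₀ : (Module.End ℂ V)ˣ) : Module.End ℂ V) * Φ B *
            (((u h₀)⁻¹ : (Module.End ℂ V)ˣ) : Module.End ℂ V)) *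
          ((u h₀ : (Module.End ℂ V)ˣ) : Module.End ℂ V) := by
          simp only [mul_assoc]
      _ = Φ B * ρ h₀ := by
          rw [h1, huval]
  have hΦB : ∀ B, Φ B = ((Nat.card (PG p t s r) : ℂ) * ((d : ℂ)⁻¹ * LinearMap.trace ℂ V B)) •
      (1 : Module.End ℂ V) := by
    intro B
    obtain ⟨ν, hν⟩ := schur (Φ B) (fun g => hΦcomm B g)
    have htr : LinearMap.trace ℂ V (Φ B)
        = (Nat.card (PG p t s r) : ℂ) * LinearMap.trace ℂ V B := by
      rw [hΦap, map_sum]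
      have hst2 : ∀ g : PG p t s r,
          LinearMap.trace ℂ V (ρ g * B * (((u g)⁻¹ : (Module.End ℂ V)ˣ) : Module.End ℂ V))
            = LinearMap.trace ℂ V B := by
        intro g
        rw [show ρ g * B * (((u g)⁻¹ : (Module.End ℂ V)ˣ) : Module.End ℂ V)
            = ((u g : (Module.End ℂ V)ˣ) : Module.End ℂ V) * B *
              (((u g)⁻¹ : (Module.End ℂ V)ˣ) : Module.End ℂ V) from by rw [huval]]
        exact LinearMap.trace_conj ℂ B (u g)
      rw [Finset.sum_congr rfl (fun g _ => hst2 g), Finset.sum_const, Finset.card_univ,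
        nsmul_eq_mul, Nat.card_eq_fintype_card]
    rw [hν] at htr ⊢
    rw [map_smul, LinearMap.trace_one, smul_eq_mul, ← hd] at htr
    have hν2 : ν = (Nat.card (PG p t s r) : ℂ) * ((d : ℂ)⁻¹ * LinearMap.trace ℂ V B) := by
      have hstep : ν = (ν * (d : ℂ)) * (d : ℂ)⁻¹ := by
        rw [mul_assoc, mul_inv_cancel₀ hdC, mul_one]
      rw [hstep, htr]
      ring
    rw [hν2]
  have hΦop : Φ = ((Nat.card (PG p t s r) : ℂ) * (d : ℂ)⁻¹) •
      (LinearMap.smulRight (LinearMap.trace ℂ V) (1 : Module.End ℂ V)) := by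
    apply LinearMap.ext
    intro B
    rw [hΦB B]
    simp only [LinearMap.smul_apply, LinearMap.smulRight_apply]
    rw [smul_smul]
    ring_nf
  have htrΦ1 : LinearMap.trace ℂ (Module.End ℂ V) Φ = (Nat.card H : ℂ) * (d : ℂ) ^ 2 := by
    rw [hΦ, map_sum]
    rw [Finset.sum_congr rfl (fun g _ => trace_conjOp_end (ρ g)
      (((u g)⁻¹ : (Module.End ℂ V)ˣ) : Module.End ℂ V))]
    have hterm2 : ∀ g : PG p t s r, LinearMap.trace ℂ V (ρ g) *
        LinearMap.trace ℂ V (((u g)⁻¹ : (Module.End ℂ V)ˣ) : Module.End ℂ V)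
        = if g ∈ H then ((d : ℂ)) ^ 2 else 0 := by
      intro g
      by_cases hg : g ∈ H
      · rw [if_pos hg, trH g hg, trHinv g hg, mul_mul_mul_comm,
          mul_inv_cancel₀ (hμ0 g hg), one_mul, sq]
      · rw [if_neg hg, trNH g hg, zero_mul]
    rw [Finset.sum_congr rfl (fun g _ => hterm2 g)]
    rw [Finset.sum_ite, Finset.sum_const, Finset.sum_const_zero, add_zero, nsmul_eq_mul]
    congr 2
    rw [Nat.card_eq_fintype_card, Fintype.card_subtype]
  have htrΦ2 : LinearMap.trace ℂ (Module.End ℂ V) Φ = (Nat.card (PG p t s r) : ℂ) := by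
    rw [hΦop, map_smul, trace_traceOne_end, smul_eq_mul, ← hd]
    rw [mul_assoc, inv_mul_cancel₀ hdC, mul_one]
  have hnat : Nat.card H * d ^ 2 = Nat.card (PG p t s r) := by
    have hC : (Nat.card H : ℂ) * (d : ℂ) ^ 2 = (Nat.card (PG p t s r) : ℂ) :=
      htrΦ1.symm.trans htrΦ2
    exact_mod_cast hC
  -- counting
  have hHprod : Nat.card H =
      Nat.card {m : ∀ i : Fin t, ZMod (p ^ r i) |
        Matrix.vecMul (fun i =>
          ZMod.castHom (dvd_pow_self p (Nat.one_le_iff_ne_zero.mp (hr i))) (ZMod p) (m i)) c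
          = 0} *
      Nat.card {kk : Fin s → ZMod p | c.mulVec kk = 0} := by
    have hsetH : H = ({m : ∀ i : Fin t, ZMod (p ^ r i) |
        Matrix.vecMul (fun i =>
          ZMod.castHom (dvd_pow_self p (Nat.one_le_iff_ne_zero.mp (hr i))) (ZMod p) (m i)) c
          = 0} ×ˢ {kk : Fin s → ZMod p | c.mulVec kk = 0}) := by
      ext x
      rw [Set.mem_prod]
      exact eForm_radical_iff p r hr c x
    rw [hsetH, Nat.card_congr (Equiv.Set.prod _ _), Nat.card_prod]
  have hG : Nat.card (PG p t s r) = Nat.card (∀ i : Fin t, ZMod (p ^ r i)) * p ^ s := by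
    rw [Nat.card_prod]
    congr 1
    rw [Nat.card_pi]
    simp [Nat.card_zmod]
  have hc1 := card_ker_vecMulPi p r hr c
  have hc2 := card_ker_mulVec p c
  have hfinal : Nat.card (PG p t s r) = p ^ (2 * c.rank) * Nat.card H := by
    rw [hG, ← hc1, ← hc2, hHprod]
    ring
  have hHpos : 0 < Nat.card H := by
    have h0 : (0 : PG p t s r) ∈ H := by
      rw [hH, Set.mem_setOf_eq]
      apply (eForm_radical_iff p r hr c 0).mpr
      constructor
      · rw [show (fun i => ZMod.castHom (dvd_pow_self p (Nat.one_le_iff_ne_zero.mp (hr i)))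
            (ZMod p) ((0 : PG p t s r).1 i)) = (0 : Fin t → ZMod p) from by
          funext i; exact map_zero _]
        exact Matrix.zero_vecMul c
      · exact Matrix.mulVec_zero c
    haveI : Nonempty H := ⟨⟨0, h0⟩⟩
    exact Nat.card_pos
  have hd2 : d ^ 2 = p ^ (2 * c.rank) := by
    have h1 : Nat.card H * d ^ 2 = Nat.card H * p ^ (2 * c.rank) := by
      rw [hnat, hfinal]
      ring
    exact Nat.eq_of_mul_eq_mul_left hHpos h1
  have hdeq : d = p ^ c.rank := by
    have h2 : d ^ 2 = (p ^ c.rank) ^ 2 := by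
      rw [hd2, ← pow_mul, mul_comm]
    exact Nat.pow_left_injective (by norm_num) h2
  refine ⟨hdeq, ?_⟩
  rw [hdeq]
  have h1 : c.rank ≤ min s t :=
    le_min (le_trans c.rank_le_card_width (by simp))
      (le_trans c.rank_le_card_height (by simp))
  exact Nat.pow_le_pow_right hp.pos h1
end

section
/- The only α-regular element of G is 0 if and only if s = t, r i = 1 for every i : Fin t, and c.rank = t. -/
open Module Matrix

lemma auxRank {K : Type*} [Field K] {a b : ℕ} (A : Matrix (Fin a) (Fin b) K) :
    (∀ v : Fin b → K, (∀ i, ∑ j, A i j * v j = 0) → v = 0) ↔ A.rank = b := by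
  have hmv : ∀ (v : Fin b → K) (i : Fin a), A.mulVec v i = ∑ j, A i j * v j := by
    intro v i; simp [Matrix.mulVec, dotProduct]
  have hrn : A.rank + finrank K (LinearMap.ker A.mulVecLin) = b := by
    simpa [Module.finrank_fintype_fun_eq_card, Matrix.rank] using
      LinearMap.finrank_range_add_finrank_ker A.mulVecLin
  constructor
  · intro h
    have hker : LinearMap.ker A.mulVecLin = ⊥ := by
      rw [LinearMap.ker_eq_bot']
      intro v hv
      refine h v fun i => ?_
      rw [← hmv]
      simp only [Matrix.mulVecLin_apply] at hv
      rw [hv]; rfl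
    rw [hker] at hrn; simpa using hrn
  · intro h v hv
    have h0 : finrank K (LinearMap.ker A.mulVecLin) = 0 := by omega
    have hker : LinearMap.ker A.mulVecLin = ⊥ := Submodule.finrank_eq_zero.mp h0
    have : v ∈ LinearMap.ker A.mulVecLin := by
      simp only [LinearMap.mem_ker, Matrix.mulVecLin_apply]
      funext i; rw [hmv]; exact hv i
    rw [hker] at this; simpa using this

/-- the natural projection -/
noncomputable def projP (p : ℕ) {t : ℕ} (r : Fin t → ℕ) (hr : ∀ i, 1 ≤ r i) (i : Fin t) :
    ZMod (p ^ r i) →+* ZMod p :=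
  ZMod.castHom (dvd_pow_self p (Nat.one_le_iff_ne_zero.mp (hr i))) (ZMod p)

theorem alpha_regular_only_zero_iff (p t s : ℕ) (hp : p.Prime) (ht : 1 ≤ t) (hs : 1 ≤ s)
    (r : Fin t → ℕ) (hr : ∀ i, 1 ≤ r i)
    (c : Matrix (Fin t) (Fin s) (ZMod p)) (ξ : ℂˣ) (hξ : IsPrimitiveRoot ξ p) :
    {g : (∀ i : Fin t, ZMod (p ^ r i)) × (Fin s → ZMod p) |
        ∀ x, bilinAlpha p r hr c ξ g x = bilinAlpha p r hr c ξ x g} = {0} ↔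
      (s = t ∧ (∀ i, r i = 1) ∧ c.rank = t) := by
  haveI : Fact p.Prime := ⟨hp⟩
  haveI : NeZero p := ⟨hp.ne_zero⟩
  have hpow : ∀ a b : ZMod p, ξ ^ a.val = ξ ^ b.val ↔ a = b := by
    intro a b
    constructor
    · intro h
      exact ZMod.val_injective p (hξ.pow_inj (ZMod.val_lt a) (ZMod.val_lt b) h)
    · rintro rfl; rfl
  have key : ∀ g x : (∀ i : Fin t, ZMod (p ^ r i)) × (Fin s → ZMod p),
      bilinAlpha p r hr c ξ g x = bilinAlpha p r hr c ξ x g ↔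
      (∑ i, ∑ j, c i j * projP p r hr i (x.1 i) * g.2 j)
        = (∑ i, ∑ j, c i j * projP p r hr i (g.1 i) * x.2 j) := by
    intro g x
    exact hpow _ _
  have hchar : ∀ g : (∀ i : Fin t, ZMod (p ^ r i)) × (Fin s → ZMod p),
      (∀ x, bilinAlpha p r hr c ξ g x = bilinAlpha p r hr c ξ x g) ↔
      ((∀ i, ∑ j, c i j * g.2 j = 0) ∧ (∀ j, ∑ i, c i j * projP p r hr i (g.1 i) = 0)) := by
    intro g
    constructor
    · intro h
      constructor
      · intro i0
        have h1 := (key g (Pi.single i0 1, 0)).mp (h _)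
        rw [Finset.sum_eq_single i0 (fun i _ hne => by
            simp [Pi.single_eq_of_ne hne]) (fun hmem => absurd (Finset.mem_univ i0) hmem)] at h1
        simpa using h1
      · intro j0
        have h1 := (key g (0, Pi.single j0 1)).mp (h _)
        simp only [Prod.fst, Prod.snd, Pi.zero_apply, map_zero, mul_zero, zero_mul,
          Finset.sum_const_zero] at h1
        rw [Finset.sum_comm] at h1
        rw [Finset.sum_eq_single j0 (fun j _ hne => by
            simp [Pi.single_eq_of_ne hne]) (fun hmem => absurd (Finset.mem_univ j0) hmem)] at h1
        simp only [Pi.single_eq_same, mul_one] at h1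
        exact h1.symm
    · rintro ⟨h1, h2⟩ x
      rw [key]
      have hl : (∑ i, ∑ j, c i j * projP p r hr i (x.1 i) * g.2 j) = 0 := by
        refine Finset.sum_eq_zero fun i _ => ?_
        have : (∑ j, c i j * projP p r hr i (x.1 i) * g.2 j)
            = projP p r hr i (x.1 i) * ∑ j, c i j * g.2 j := by
          rw [Finset.mul_sum]
          exact Finset.sum_congr rfl fun j _ => by ring
        rw [this, h1 i, mul_zero]
      have hrr : (∑ i, ∑ j, c i j * projP p r hr i (g.1 i) * x.2 j) = 0 := by
        rw [Finset.sum_comm]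
        refine Finset.sum_eq_zero fun j _ => ?_
        have : (∑ i, c i j * projP p r hr i (g.1 i) * x.2 j)
            = x.2 j * ∑ i, c i j * projP p r hr i (g.1 i) := by
          rw [Finset.mul_sum]
          exact Finset.sum_congr rfl fun i _ => by ring
        rw [this, h2 j, mul_zero]
      rw [hl, hrr]
  rw [Set.ext_iff]
  simp only [Set.mem_setOf_eq, Set.mem_singleton_iff]
  constructor
  · intro H
    -- rank c = s
    have hranks : c.rank = s := by
      rw [← auxRank c]
      intro v hv
      have := (H (0, v)).mp (by
        rw [hchar]
        refine ⟨fun i => hv i, fun j => ?_⟩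
        refine Finset.sum_eq_zero fun i _ => ?_
        simp)
      exact congrArg Prod.snd this
    -- all r i = 1
    have hr1 : ∀ i, r i = 1 := by
      intro i0
      by_contra hne
      have h2 : 2 ≤ r i0 := by have := hr i0; omega
      haveI : NeZero (p ^ r i0) := ⟨pow_ne_zero _ hp.ne_zero⟩
      set m : ∀ i : Fin t, ZMod (p ^ r i) :=
        Pi.single i0 ((p ^ (r i0 - 1) : ℕ) : ZMod (p ^ r i0)) with hm
      have hcond := (H (m, 0)).mp (by
        rw [hchar]
        constructor
        · intro i; refine Finset.sum_eq_zero fun j _ => ?_; simp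
        · intro j
          refine Finset.sum_eq_zero fun i _ => ?_
          rcases eq_or_ne i i0 with rfl | hne2
          · have hz : ((p ^ (r i - 1) : ℕ) : ZMod p) = 0 := by
              rw [ZMod.natCast_eq_zero_iff]
              exact dvd_pow_self p (by omega)
            simp [hm, Pi.single_eq_same, map_natCast, hz]
            exact Or.inr (by omega)
          · simp [hm, Pi.single_eq_of_ne hne2])
      have hm0 : m = 0 := congrArg Prod.fst hcond
      have hval := congrFun hm0 i0
      rw [hm, Pi.single_eq_same] at hval
      simp only [Pi.zero_apply] at hval
      rw [ZMod.natCast_eq_zero_iff] at hval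
      have hle := Nat.le_of_dvd (pow_pos hp.pos _) hval
      have hlt := Nat.pow_lt_pow_right hp.one_lt (show r i0 - 1 < r i0 by omega)
      omega
    -- rank cᵀ = t
    have hrankt : c.rank = t := by
      have hKt : ∀ w : Fin t → ZMod p, (∀ j, ∑ i, cᵀ j i * w i = 0) → w = 0 := by
        intro w hw
        set m : ∀ i : Fin t, ZMod (p ^ r i) := fun i => ((w i).val : ZMod (p ^ r i)) with hm
        haveI : ∀ i : Fin t, NeZero (p ^ r i) := fun i => ⟨pow_ne_zero _ hp.ne_zero⟩
        have hproj : ∀ i, projP p r hr i (m i) = w i := by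
          intro i
          rw [hm]
          simp only [map_natCast]
          exact ZMod.natCast_rightInverse (w i)
        have hcond := (H (m, 0)).mp (by
          rw [hchar]
          constructor
          · intro i; refine Finset.sum_eq_zero fun j _ => ?_; simp
          · intro j
            have := hw j
            simp only [Matrix.transpose_apply] at this
            calc ∑ i, c i j * projP p r hr i (m i) = ∑ i, c i j * w i := by
                  exact Finset.sum_congr rfl fun i _ => by rw [hproj]
              _ = 0 := this)
        have hm0 : m = 0 := congrArg Prod.fst hcond
        funext i
        have hz0 := congrFun hm0 i
        simp only [Pi.zero_apply] at hz0 ⊢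
        rw [← hproj i, hz0, map_zero]
      have h' := (auxRank cᵀ).mp hKt
      rwa [Matrix.rank_transpose] at h'
    refine ⟨by rw [← hranks, hrankt], hr1, hrankt⟩
  · rintro ⟨hst, hr1, hrk⟩ g
    constructor
    · intro h
      rw [hchar] at h
      obtain ⟨h1, h2⟩ := h
      have hg2 : g.2 = 0 := (auxRank c).mpr (by rw [hrk, hst]) g.2 h1
      have hg1 : g.1 = 0 := by
        have hw : (fun i => projP p r hr i (g.1 i)) = 0 := by
          refine (auxRank cᵀ).mpr (by rw [Matrix.rank_transpose, hrk]) _ fun j => ?_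
          simp only [Matrix.transpose_apply]
          exact h2 j
        funext i
        have hwi : projP p r hr i (g.1 i) = 0 := congrFun hw i
        haveI : NeZero (p ^ r i) := ⟨pow_ne_zero _ hp.ne_zero⟩
        have hvz : (((g.1 i).val : ℕ) : ZMod p) = 0 := by
          rw [← map_natCast (projP p r hr i)]
          rw [show (((g.1 i).val : ℕ) : ZMod (p ^ r i)) = g.1 i from
            ZMod.natCast_rightInverse (g.1 i)]
          exact hwi
        rw [ZMod.natCast_eq_zero_iff] at hvz
        have hlt : (g.1 i).val < p := by
          have hv := ZMod.val_lt (g.1 i)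
          have hpe : p ^ r i = p := by rw [hr1 i, pow_one]
          omega
        have hv0 : (g.1 i).val = 0 := by
          rcases Nat.eq_zero_or_pos (g.1 i).val with h0 | hpos
          · exact h0
          · exact absurd (Nat.le_of_dvd hpos hvz) (by omega)
        exact (ZMod.val_eq_zero _).mp hv0
      exact Prod.ext hg1 hg2
    · rintro rfl
      rw [hchar]
      constructor
      · intro i; refine Finset.sum_eq_zero fun j _ => ?_; simp
      · intro j; refine Finset.sum_eq_zero fun i _ => ?_; simp
end

section
/- Let p be a prime, r ≥ 1 a natural number, c₀ a natural number with 1 ≤ c₀ ≤ p - 1, and ξ ∈ ℂ a primitive p-th root of unity. Define the p×p complex matrices D := Matrix.diagonal (fun m : Fin p => (ξ ^ (m.val * c₀))⁻¹) and S with S m n = 1 if m = n + 1 (addition in Fin p) and S m n = 0 otherwise, and define Γ : ZMod (p ^ r) × ZMod p → Matrix (Fin p) (Fin p) ℂ by Γ (l, q) := D ^ l.val * S ^ q.val. Then: (a) Γ 0 = 1; (b) Γ (l, q) * Γ (l', q') = ξ ^ (c₀ * l'.val * q.val) • Γ (l + l', q + q') for all l, l' ∈ ZMod (p ^ r) and q,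 q' ∈ ZMod p; (c) the only ℂ-submodules W of (Fin p → ℂ) satisfying (Γ g).mulVec '' W ⊆ W for all g ∈ ZMod (p ^ r) × ZMod p are ⊥ and ⊤. (Thus Γ is an irreducible projective representation of ℤ/p^rℤ × ℤ/pℤ with bilinear cocycle determined by c₀.) -/
theorem powCongrAux {M : Type*} [Monoid M] (x : M) (p : ℕ) (hx : x ^ p = 1) {a b : ℕ}
    (h : a % p = b % p) : x ^ a = x ^ b := by
  have key : ∀ c : ℕ, x ^ c = x ^ (c % p) := by
    intro c
    conv_lhs => rw [← Nat.div_add_mod c p]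
    rw [pow_add, pow_mul, hx, one_pow, one_mul]
  rw [key a, key b, h]

open Fin.CommRing Fin.NatCast

theorem irreducible_projective_rep_of_zmod_pr_prod_zmod_p
    (p r c₀ : ℕ) (hp : p.Prime) [NeZero p] (hr : 1 ≤ r) (hc₀ : 1 ≤ c₀) (hc₀' : c₀ ≤ p - 1)
    (ξ : ℂ) (hξ : IsPrimitiveRoot ξ p)
    (D S : Matrix (Fin p) (Fin p) ℂ)
    (hD : D = Matrix.diagonal fun m : Fin p => (ξ ^ (m.val * c₀))⁻¹)
    (hS : ∀ m n : Fin p, S m n = if m = n + 1 then 1 else 0)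
    (Γ : ZMod (p ^ r) × ZMod p → Matrix (Fin p) (Fin p) ℂ)
    (hΓ : ∀ (l : ZMod (p ^ r)) (q : ZMod p), Γ (l, q) = D ^ l.val * S ^ q.val) :
    Γ 0 = 1 ∧
    (∀ (l l' : ZMod (p ^ r)) (q q' : ZMod p),
      Γ (l, q) * Γ (l', q') = ξ ^ (c₀ * l'.val * q.val) • Γ (l + l', q + q')) ∧
    (∀ W : Submodule ℂ (Fin p → ℂ),
      (∀ g, (Γ g).mulVec '' (W : Set (Fin p → ℂ)) ⊆ (W : Set (Fin p → ℂ))) →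
        W = ⊥ ∨ W = ⊤) := by
  haveI := Fact.mk hp
  have hp2 : 2 ≤ p := hp.two_le
  have hp0 : 0 < p := hp.pos
  have hr0 : r ≠ 0 := by omega
  have hξp : ξ ^ p = 1 := hξ.pow_eq_one
  have hξ0 : ξ ≠ 0 := hξ.ne_zero hp0.ne'
  have hone : ∀ a : ℕ, ξ ^ a = ξ ^ (a % p) :=
    fun a => powCongrAux ξ p hξp (Nat.mod_mod_of_dvd a dvd_rfl).symm
  have hDp : D ^ p = 1 := by
    rw [hD, Matrix.diagonal_pow]
    have : (fun m : Fin p => (ξ ^ (m.val * c₀))⁻¹) ^ p = 1 := by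
      funext n
      simp only [Pi.pow_apply, Pi.one_apply]
      rw [inv_pow, ← pow_mul, mul_comm (n.val * c₀) p, pow_mul, hξp, one_pow, inv_one]
    rw [this]
    exact Matrix.diagonal_one
  have hSpow : ∀ k : ℕ, ∀ m n : Fin p, (S ^ k) m n = if m = n + (k : Fin p) then 1 else 0 := by
    intro k
    induction k with
    | zero => intro m n; simp [Matrix.one_apply]
    | succ k ih =>
      intro m n
      have h2 : n + 1 + (k : Fin p) = n + ((k + 1 : ℕ) : Fin p) := by push_cast; ring
      rw [pow_succ, Matrix.mul_apply]
      simp only [hS, mul_ite, mul_one, mul_zero]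
      rw [Finset.sum_ite_eq' Finset.univ (n + 1) fun j => (S ^ k) m j]
      simp [ih, h2]
  have hSp : S ^ p = 1 := by
    ext m n
    rw [hSpow]
    simp [Matrix.one_apply, Fin.natCast_self]
  -- Part (a)
  have parta : Γ 0 = 1 := by
    rw [show (0 : ZMod (p ^ r) × ZMod p) = (0, 0) from rfl, hΓ]
    simp
  -- commutation relation
  have hval1 : (1 : Fin p).val = 1 := by
    rw [Fin.val_one']
    exact Nat.mod_eq_of_lt hp2
  have hSD : S * D = ξ ^ c₀ • (D * S) := by
    rw [hD]
    ext m n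
    rw [Matrix.mul_diagonal, Matrix.smul_apply, Matrix.diagonal_mul, hS]
    by_cases h : m = n + 1
    · subst h
      simp only [if_pos rfl, mul_one, smul_eq_mul]
      have hval : ((n + 1 : Fin p)).val = (n.val + 1) % p := by
        rw [Fin.val_add, hval1]
      have hkey2 : ξ ^ (((n + 1 : Fin p)).val * c₀) = ξ ^ (c₀ + n.val * c₀) := by
        rw [hone (((n + 1 : Fin p)).val * c₀), hone (c₀ + n.val * c₀)]
        congr 1
        rw [hval]
        calc ((n.val + 1) % p * c₀) % p = ((n.val + 1) * c₀) % p :=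
              Nat.ModEq.mul_right c₀ (Nat.mod_modEq _ p)
          _ = (c₀ + n.val * c₀) % p := by ring_nf
      rw [hkey2, pow_add]
      field_simp
    · simp [h]
  have hSDk : ∀ k : ℕ, S * D ^ k = ξ ^ (c₀ * k) • (D ^ k * S) := by
    intro k
    induction k with
    | zero => simp
    | succ k ih =>
      rw [pow_succ, ← mul_assoc, ih, smul_mul_assoc, mul_assoc, hSD, mul_smul_comm, smul_smul,
        ← pow_add, ← mul_assoc, ← pow_succ,
        show c₀ * k + c₀ = c₀ * (k + 1) by ring]
  have hSqDk : ∀ q k : ℕ, S ^ q * D ^ k = ξ ^ (c₀ * k * q) • (D ^ k * S ^ q) := by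
    intro q k
    induction q with
    | zero => simp
    | succ q ih =>
      rw [pow_succ, mul_assoc, hSDk, mul_smul_comm, ← mul_assoc, ih, smul_mul_assoc, smul_smul,
        ← pow_add, mul_assoc, ← pow_succ,
        show c₀ * k + c₀ * (k * q) = c₀ * k * (q + 1) by ring]
      rw [mul_assoc (D ^ k), ← pow_succ]
  -- Part (b)
  have partb : ∀ (l l' : ZMod (p ^ r)) (q q' : ZMod p),
      Γ (l, q) * Γ (l', q') = ξ ^ (c₀ * l'.val * q.val) • Γ (l + l', q + q') := by
    intro l l' q q'
    rw [hΓ, hΓ, hΓ]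
    have e2 : D ^ ((l + l').val) = D ^ (l.val + l'.val) :=
      powCongrAux D p hDp (by
        rw [ZMod.val_add]
        exact Nat.mod_mod_of_dvd _ (dvd_pow_self p hr0))
    have e3 : S ^ ((q + q').val) = S ^ (q.val + q'.val) :=
      powCongrAux S p hSp (by
        rw [ZMod.val_add]
        exact Nat.mod_mod_of_dvd _ dvd_rfl)
    rw [e2, e3, pow_add, pow_add]
    rw [mul_assoc, ← mul_assoc (S ^ q.val), hSqDk q.val l'.val, smul_mul_assoc, mul_smul_comm]
    congr 1
    rw [mul_assoc, mul_assoc]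
  refine ⟨parta, partb, ?_⟩
  -- Part (c)
  intro W hW
  by_cases hWbot : W = ⊥
  · exact Or.inl hWbot
  right
  obtain ⟨v, hv, hv0⟩ := (Submodule.ne_bot_iff W).mp hWbot
  obtain ⟨m, hm⟩ : ∃ m, v m ≠ 0 := by
    by_contra h
    push_neg at h
    exact hv0 (funext h)
  have hDl : ∀ l : ℕ, ∀ u ∈ W, (D ^ l).mulVec u ∈ W := by
    intro l u hu
    have h1 : Γ ((l : ZMod (p ^ r)), 0) = D ^ l := by
      rw [hΓ]
      have : D ^ ((l : ZMod (p ^ r)).val) = D ^ l :=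
        powCongrAux D p hDp (by
          rw [ZMod.val_natCast]
          exact Nat.mod_mod_of_dvd _ (dvd_pow_self p hr0))
      rw [ZMod.val_zero, pow_zero, mul_one, this]
    have h2 := hW ((l : ZMod (p ^ r)), 0) ⟨u, hu, rfl⟩
    rwa [h1] at h2
  have hSl : ∀ j : ℕ, ∀ u ∈ W, (S ^ j).mulVec u ∈ W := by
    intro j u hu
    have h1 : Γ (0, (j : ZMod p)) = S ^ j := by
      rw [hΓ]
      have : S ^ (((j : ZMod p)).val) = S ^ j :=
        powCongrAux S p hSp (by
          rw [ZMod.val_natCast]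
          exact Nat.mod_mod_of_dvd _ dvd_rfl)
      rw [ZMod.val_zero, pow_zero, one_mul, this]
    have h2 := hW (0, (j : ZMod p)) ⟨u, hu, rfl⟩
    rwa [h1] at h2
  have hmulVec : ∀ (l : ℕ) (n : Fin p),
      (D ^ l).mulVec v n = ((ξ ^ (n.val * c₀))⁻¹) ^ l * v n := by
    intro l n
    rw [hD, Matrix.diagonal_pow, Matrix.mulVec_diagonal]
    simp [Pi.pow_apply]
  have hWsingle : Pi.single m (1 : ℂ) ∈ W := by
    set w : Fin p → ℂ :=
      ∑ l ∈ Finset.range p, ξ ^ (l * (m.val * c₀)) • (D ^ l).mulVec v with hwdef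
    have hwW : w ∈ W :=
      Submodule.sum_mem _ fun l _ => Submodule.smul_mem _ _ (hDl l v hv)
    have hwval : w = (p : ℂ) • (Pi.single m (v m) : Fin p → ℂ) := by
      funext n
      have hterm : w n = (∑ l ∈ Finset.range p,
          (ξ ^ (m.val * c₀) * (ξ ^ (n.val * c₀))⁻¹) ^ l) * v n := by
        rw [hwdef]
        simp only [Finset.sum_apply, Pi.smul_apply, smul_eq_mul, hmulVec]
        rw [Finset.sum_mul]
        refine Finset.sum_congr rfl fun l _ => ?_
        rw [mul_pow, pow_mul']
        ring
      rw [hterm]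
      by_cases hnm : n = m
      · subst hnm
        rw [mul_inv_cancel₀ (pow_ne_zero _ hξ0)]
        simp [Finset.sum_const, Finset.card_range, Pi.single_eq_same, mul_comm]
      · have hη1 : ξ ^ (m.val * c₀) * (ξ ^ (n.val * c₀))⁻¹ ≠ 1 := by
          intro hcon
          have heq : ξ ^ (m.val * c₀) = ξ ^ (n.val * c₀) := by
            field_simp at hcon
            exact hcon
          have h2 : (m.val * c₀) % p = (n.val * c₀) % p :=
            hξ.pow_inj (Nat.mod_lt _ hp0) (Nat.mod_lt _ hp0) (by rw [← hone, ← hone, heq])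
          have h3 : ((m.val * c₀ : ℕ) : ZMod p) = ((n.val * c₀ : ℕ) : ZMod p) :=
            (ZMod.natCast_eq_natCast_iff _ _ _).mpr h2
          have hc : (c₀ : ZMod p) ≠ 0 := by
            rw [Ne, ZMod.natCast_eq_zero_iff]
            intro hdvd
            have := Nat.le_of_dvd (by omega) hdvd
            omega
          push_cast at h3
          have h4 : (m.val : ZMod p) = (n.val : ZMod p) := mul_right_cancel₀ hc h3
          have h5 : m.val % p = n.val % p := (ZMod.natCast_eq_natCast_iff _ _ _).mp h4
          rw [Nat.mod_eq_of_lt m.isLt, Nat.mod_eq_of_lt n.isLt] at h5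
          exact hnm (Fin.ext h5).symm
        have hηp : (ξ ^ (m.val * c₀) * (ξ ^ (n.val * c₀))⁻¹) ^ p = 1 := by
          have hh1 : (ξ ^ (m.val * c₀)) ^ p = 1 := by
            rw [← pow_mul, mul_comm, pow_mul, hξp, one_pow]
          have hh2 : (ξ ^ (n.val * c₀)) ^ p = 1 := by
            rw [← pow_mul, mul_comm, pow_mul, hξp, one_pow]
          rw [mul_pow, hh1, inv_pow, hh2, inv_one, mul_one]
        rw [geom_sum_eq hη1, hηp]
        simp [Pi.single_eq_of_ne hnm]
    have h6 : (Pi.single m (v m) : Fin p → ℂ) ∈ W := by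
      have h7 : (p : ℂ)⁻¹ • w ∈ W := Submodule.smul_mem _ _ hwW
      rwa [hwval, inv_smul_smul₀ (by exact_mod_cast hp0.ne')] at h7
    have h8 : Pi.single m (1 : ℂ) = (v m)⁻¹ • (Pi.single m (v m) : Fin p → ℂ) := by
      rw [← Pi.single_smul, smul_eq_mul, inv_mul_cancel₀ hm]
    rw [h8]
    exact Submodule.smul_mem _ _ h6
  have hSe : ∀ a : Fin p, S.mulVec (Pi.single a (1 : ℂ)) = Pi.single (a + 1) 1 := by
    intro a
    funext n
    simp only [Matrix.mulVec, dotProduct, hS, Pi.single_apply, mul_ite, mul_one, mul_zero]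
    rw [Finset.sum_ite_eq' Finset.univ a fun j => if n = j + 1 then (1 : ℂ) else 0]
    simp
  have hSk : ∀ j : ℕ, (S ^ j).mulVec (Pi.single m (1 : ℂ)) = Pi.single (m + (j : Fin p)) 1 := by
    intro j
    induction j with
    | zero => rw [pow_zero, Matrix.one_mulVec, Nat.cast_zero, add_zero]
    | succ j ih =>
      have hc : ((j + 1 : ℕ) : Fin p) = (j : Fin p) + 1 := by push_cast; ring
      rw [pow_succ', ← Matrix.mulVec_mulVec, ih, hSe, hc, add_assoc]
  have hall : ∀ k : Fin p, Pi.single k (1 : ℂ) ∈ W := by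
    intro k
    have h7 := hSl (k - m).val _ hWsingle
    rwa [hSk, Fin.cast_val_eq_self, add_sub_cancel] at h7
  refine Submodule.eq_top_iff'.mpr fun u => ?_
  rw [← Finset.univ_sum_single u]
  refine Submodule.sum_mem _ fun i _ => ?_
  have h9 : (Pi.single i (u i) : Fin p → ℂ) = u i • (Pi.single i (1 : ℂ) : Fin p → ℂ) := by
    rw [← Pi.single_smul, smul_eq_mul, mul_one]
  rw [h9]
  exact Submodule.smul_mem _ _ (hall i)
end

section
/- Let p be a prime, r₁, r₂ ≥ 1 natural numbers, and ξ ∈ ℂ a primitive p-th root of unity. Define the p×p complex matrices D := Matrix.diagonal (fun m : Fin p => (ξ ^ m.val)⁻¹) and S with S m n = 1 if m = n + 1 (addition in Fin p) and S m n = 0 otherwise, and define τ : ZMod (p ^ r₁) × ZMod (p ^ r₂) × ZMod p × ZMod p → Matrix (Fin p) (Fin p) ℂ by τ (m₁, m₂, k₁, k₂) := D ^ m₁.val * S ^ (k₁ + k₂).val. Then: (a) τ 0 = 1; (b) τ (m₁, m₂, k₁, k₂) * τ (m₁', m₂', k₁', k₂') = ξ ^ (m₁'.val * (k₁ + k₂).val)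 • τ (m₁ + m₁', m₂ + m₂', k₁ + k₁', k₂ + k₂'); (c) the only ℂ-submodules W of (Fin p → ℂ) satisfying (τ g).mulVec '' W ⊆ W for all g are ⊥ and ⊤. -/
theorem irreducible_projective_rep_example_tau
    (p r₁ r₂ : ℕ) (hp : p.Prime) [NeZero p] (hr₁ : 1 ≤ r₁) (hr₂ : 1 ≤ r₂)
    (ξ : ℂ) (hξ : IsPrimitiveRoot ξ p)
    (D S : Matrix (Fin p) (Fin p) ℂ)
    (hD : D = Matrix.diagonal fun m : Fin p => (ξ ^ m.val)⁻¹)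
    (hS : ∀ m n : Fin p, S m n = if m = n + 1 then 1 else 0)
    (τ : ZMod (p ^ r₁) × ZMod (p ^ r₂) × ZMod p × ZMod p → Matrix (Fin p) (Fin p) ℂ)
    (hτ : ∀ (m₁ : ZMod (p ^ r₁)) (m₂ : ZMod (p ^ r₂)) (k₁ k₂ : ZMod p),
      τ (m₁, m₂, k₁, k₂) = D ^ m₁.val * S ^ (k₁ + k₂).val) :
    τ 0 = 1 ∧
    (∀ (m₁ m₁' : ZMod (p ^ r₁)) (m₂ m₂' : ZMod (p ^ r₂)) (k₁ k₂ k₁' k₂' : ZMod p),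
      τ (m₁, m₂, k₁, k₂) * τ (m₁', m₂', k₁', k₂') =
        ξ ^ (m₁'.val * (k₁ + k₂).val) • τ (m₁ + m₁', m₂ + m₂', k₁ + k₁', k₂ + k₂')) ∧
    (∀ W : Submodule ℂ (Fin p → ℂ),
      (∀ g, (τ g).mulVec '' (W : Set (Fin p → ℂ)) ⊆ (W : Set (Fin p → ℂ))) →
        W = ⊥ ∨ W = ⊤) := by
  haveI : NeZero (p ^ r₁) := ⟨pow_ne_zero _ (NeZero.ne p)⟩
  haveI : NeZero (p ^ r₂) := ⟨pow_ne_zero _ (NeZero.ne p)⟩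
  have hp1 : 1 < p := hp.one_lt
  haveI : Fact (1 < p) := ⟨hp1⟩
  haveI : Fact (1 < p ^ r₁) := ⟨Nat.one_lt_pow (by omega) hp1⟩
  have hξp : ξ ^ p = 1 := hξ.pow_eq_one
  have hξ0 : ξ ≠ 0 := hξ.ne_zero (NeZero.ne p)
  have hξmod : ∀ a : ℕ, ξ ^ (a % p) = ξ ^ a := fun a => (pow_eq_pow_mod a hξp).symm
  have hξval : ∀ j : Fin p, ξ ^ (j + 1).val = ξ ^ (j.val + 1) := by
    intro j
    have : (j + 1).val = (j.val + 1) % p := by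
      simp [Fin.add_def]
    rw [this, hξmod]
  -- D ^ p = 1
  have hDp : D ^ p = 1 := by
    rw [hD, Matrix.diagonal_pow]
    have : ((fun m : Fin p => (ξ ^ m.val)⁻¹) ^ p) = fun _ : Fin p => (1 : ℂ) := by
      funext m
      simp only [Pi.pow_apply]
      rw [inv_pow, ← pow_mul, mul_comm m.val p, pow_mul, hξp, one_pow, inv_one]
    rw [this, Matrix.diagonal_one]
  -- S ^ k entries
  open Fin.NatCast in
  have hSpow : ∀ k : ℕ, S ^ k = Matrix.of fun i j : Fin p => if i = j + (k : Fin p) then (1 : ℂ) else 0 := by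
    intro k
    induction k with
    | zero =>
      ext i j
      simp [Matrix.one_apply, eq_comm]
    | succ k ih =>
      ext i j
      rw [pow_succ, ih, Matrix.mul_apply]
      have hc : j + 1 + (k : Fin p) = j + ((k + 1 : ℕ) : Fin p) := by push_cast; abel
      simp only [Matrix.of_apply, hS, mul_ite, mul_one, mul_zero]
      rw [Finset.sum_ite_eq' Finset.univ (j + 1) (fun t => if i = t + (k : Fin p) then (1:ℂ) else 0)]
      rw [hc]
      simp
  -- S ^ p = 1
  open Fin.NatCast in
  have hSp : S ^ p = 1 := by
    rw [hSpow]
    ext i j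
    simp [Matrix.one_apply, Fin.natCast_self]
  -- commutation S * D = ξ • (D * S)
  have hSD : S * D = ξ • (D * S) := by
    ext i j
    rw [hD, Matrix.smul_apply, Matrix.mul_diagonal, Matrix.diagonal_mul, hS]
    by_cases h : i = j + 1
    · subst h
      simp only [if_pos rfl, mul_one, one_mul, smul_eq_mul]
      rw [hξval j]
      rw [pow_succ, mul_inv]
      field_simp
    · simp [h, smul_eq_mul]
  -- S * D^c = ξ^c • (D^c * S)
  have hSDc : ∀ c : ℕ, S * D ^ c = (ξ ^ c) • (D ^ c * S) := by
    intro c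
    induction c with
    | zero => simp
    | succ c ih =>
      rw [pow_succ, ← mul_assoc, ih, Matrix.smul_mul, mul_assoc, hSD, Matrix.mul_smul,
        smul_smul, ← mul_assoc, ← pow_succ, ← pow_succ]
  -- S^b * D^c = ξ^(b*c) • (D^c * S^b)
  have hcomm : ∀ b c : ℕ, S ^ b * D ^ c = (ξ ^ (b * c)) • (D ^ c * S ^ b) := by
    intro b c
    induction b with
    | zero => simp
    | succ b ih =>
      rw [pow_succ, mul_assoc, hSDc, Matrix.mul_smul, ← mul_assoc, ih, Matrix.smul_mul,
        smul_smul, ← pow_add, mul_assoc, ← pow_succ]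
      have hexp : c + b * c = (b + 1) * c := by ring
      rw [hexp]
  refine ⟨?_, ?_, ?_⟩
  · -- part (a)
    have := hτ 0 0 0 0
    rw [show (0 : ZMod (p ^ r₁) × ZMod (p ^ r₂) × ZMod p × ZMod p) = (0, 0, 0, 0) from rfl]
    simpa using this
  · -- part (b)
    intro m₁ m₁' m₂ m₂' k₁ k₂ k₁' k₂'
    rw [hτ, hτ, hτ]
    set a := m₁.val
    set b := (k₁ + k₂).val
    set c := m₁'.val
    set d := (k₁' + k₂').val
    have hDp' : D ^ (p ^ r₁) = 1 := by
      have h1 : p ^ r₁ = p * p ^ (r₁ - 1) := by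
        rw [← pow_succ']
        congr 1
        omega
      rw [h1, pow_mul, hDp, one_pow]
    have hDred : D ^ (m₁ + m₁').val = D ^ (a + c) := by
      rw [ZMod.val_add, ← pow_eq_pow_mod _ hDp']
    have hSred : S ^ (k₁ + k₁' + (k₂ + k₂')).val = S ^ (b + d) := by
      have h2 : k₁ + k₁' + (k₂ + k₂') = (k₁ + k₂) + (k₁' + k₂') := by ring
      rw [h2, ZMod.val_add, ← pow_eq_pow_mod _ hSp]
    rw [hDred, hSred]
    calc D ^ a * S ^ b * (D ^ c * S ^ d)
        = D ^ a * (S ^ b * D ^ c) * S ^ d := by simp [mul_assoc]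
      _ = ξ ^ (c * b) • (D ^ a * (D ^ c * S ^ b) * S ^ d) := by
          rw [hcomm, Matrix.mul_smul, Matrix.smul_mul, mul_comm b c]
      _ = ξ ^ (c * b) • (D ^ (a + c) * S ^ (b + d)) := by
          rw [pow_add, pow_add]
          congr 1
          simp [mul_assoc]
  · -- part (c)
    intro W hW
    by_cases hbot : W = ⊥
    · exact Or.inl hbot
    right
    have hτD : τ (1, 0, 0, 0) = D := by
      rw [hτ]
      simp [ZMod.val_one]
    have hτS : τ (0, 0, 1, 0) = S := by
      rw [hτ]
      simp [ZMod.val_one]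
    have hWD : ∀ v ∈ W, D.mulVec v ∈ W := by
      intro v hv
      have := hW (1, 0, 0, 0) ⟨v, hv, rfl⟩
      rwa [hτD] at this
    have hWS : ∀ v ∈ W, S.mulVec v ∈ W := by
      intro v hv
      have := hW (0, 0, 1, 0) ⟨v, hv, rfl⟩
      rwa [hτS] at this
    have hWDpow : ∀ (j : ℕ) (v : Fin p → ℂ), v ∈ W → (D ^ j).mulVec v ∈ W := by
      intro j
      induction j with
      | zero => intro v hv; simpa using hv
      | succ j ih =>
        intro v hv
        rw [pow_succ', ← Matrix.mulVec_mulVec]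
        exact hWD _ (ih v hv)
    obtain ⟨v, hvW, hv0⟩ := (Submodule.ne_bot_iff W).mp hbot
    obtain ⟨n, hn⟩ : ∃ n, v n ≠ 0 := by
      by_contra h
      push_neg at h
      exact hv0 (funext h)
    set w : Fin p → ℂ := (p : ℂ)⁻¹ • ∑ j : Fin p, (ξ ^ (n.val * j.val)) • (D ^ j.val).mulVec v with hw
    have hwW : w ∈ W := by
      refine W.smul_mem _ (W.sum_mem fun j _ => W.smul_mem _ (hWDpow j.val v hvW))
    have hpC : (p : ℂ) ≠ 0 := Nat.cast_ne_zero.mpr (NeZero.ne p)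
    have hwval : w = Pi.single n (v n) := by
      funext m
      have hterm : ∀ j : Fin p, ξ ^ (n.val * j.val) * (D ^ j.val).mulVec v m
          = (ξ ^ n.val * (ξ ^ m.val)⁻¹) ^ j.val * v m := by
        intro j
        rw [hD, Matrix.diagonal_pow]
        rw [Matrix.mulVec_diagonal]
        simp only [Pi.pow_apply]
        rw [mul_pow, pow_mul]
        ring
      have hsum : w m = (p : ℂ)⁻¹ * ∑ i ∈ Finset.range p, (ξ ^ n.val * (ξ ^ m.val)⁻¹) ^ i * v m := by
        rw [hw]
        simp only [Pi.smul_apply, Finset.sum_apply, smul_eq_mul]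
        rw [← Fin.sum_univ_eq_sum_range (fun i => (ξ ^ n.val * (ξ ^ m.val)⁻¹) ^ i * v m) p]
        congr 1
        exact Finset.sum_congr rfl fun j _ => hterm j
      by_cases hmn : m = n
      · subst hmn
        rw [hsum]
        simp only [mul_inv_cancel₀ (pow_ne_zero _ hξ0), one_pow, one_mul]
        rw [Finset.sum_const, Finset.card_range, Pi.single_eq_same, nsmul_eq_mul]
        field_simp
      · set ζ : ℂ := ξ ^ n.val * (ξ ^ m.val)⁻¹ with hζ
        have hζp : ζ ^ p = 1 := by
          rw [hζ, mul_pow, ← pow_mul, mul_comm n.val p, pow_mul, hξp, one_pow, inv_pow,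
            ← pow_mul, mul_comm m.val p, pow_mul, hξp, one_pow, inv_one, mul_one]
        have hζ1 : ζ ≠ 1 := by
          intro h
          apply hmn
          rw [hζ, mul_inv_eq_one₀ (pow_ne_zero _ hξ0)] at h
          exact (Fin.ext (hξ.pow_inj n.isLt m.isLt h)).symm
        rw [hsum, ← Finset.sum_mul, geom_sum_eq hζ1, hζp]
        simp [Pi.single_eq_of_ne hmn]
    have hsingle : Pi.single n (1:ℂ) ∈ W := by
      have h1 : ((v n)⁻¹ • w : Fin p → ℂ) = Pi.single n 1 := by
        rw [hwval]
        funext m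
        simp only [Pi.smul_apply, smul_eq_mul, Pi.single_apply]
        by_cases h : m = n <;> simp [h, inv_mul_cancel₀ hn]
      rw [← h1]
      exact W.smul_mem _ hwW
    have hSsingle : ∀ t : Fin p, S.mulVec (Pi.single t (1:ℂ)) = Pi.single (t + 1) 1 := by
      intro t
      funext m
      simp only [Matrix.mulVec, dotProduct, hS, Pi.single_apply, mul_ite, mul_one, mul_zero]
      rw [Finset.sum_ite_eq' Finset.univ t (fun j => if m = j + 1 then (1:ℂ) else 0)]
      simp
    open Fin.NatCast in
    have hall : ∀ j : ℕ, Pi.single (n + (j : Fin p)) (1:ℂ) ∈ W := by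
      intro j
      induction j with
      | zero => simpa using hsingle
      | succ j ih =>
        have h2 := hWS _ ih
        rw [hSsingle] at h2
        have heq : n + ((j : Fin p)) + 1 = n + (((j : ℕ) + 1 : ℕ) : Fin p) := by
          push_cast
          abel
        rwa [heq] at h2
    open Fin.NatCast in
    have hallm : ∀ m : Fin p, Pi.single m (1:ℂ) ∈ W := by
      intro m
      have := hall (m - n).val
      rwa [Fin.cast_val_eq_self, add_sub_cancel] at this
    rw [← top_le_iff, ← Module.Basis.span_eq (Pi.basisFun ℂ (Fin p)), Submodule.span_le]
    rintro x ⟨i, rfl⟩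
    rw [Pi.basisFun_apply]
    exact hallm i
end

section
/- Let Z := !![1, 0; 0, -1] and X := !![0, 1; 1, 0] be 2×2 complex matrices, and define γ : ZMod 4 × ZMod 4 × ZMod 2 × ZMod 2 → Matrix (Fin 2 × Fin 2) (Fin 2 × Fin 2) ℂ by γ (m₁, m₂, k₁, k₂) := (Z ^ m₁.val * X ^ k₂.val) ⊗ₖ (Z ^ m₂.val * X ^ k₁.val), where ⊗ₖ is the Kronecker product. Then: (a) γ 0 = 1; (b) γ (m₁, m₂, k₁, k₂) * γ (m₁', m₂', k₁', k₂') = (-1 : ℂ) ^ (m₁'.val * k₂.val + m₂'.val * k₁.val) • γ (m₁ + m₁', m₂ + m₂', k₁ + k₁', k₂ + k₂'); (c) the only ℂ-submodules W of (Fin 2 × Fin 2 → ℂ) satisfying (γ g).mulVec '' W ⊆ W for all g are ⊥ and ⊤. (Thus γ is an irreducible 4-dimensional projective representation of ℤ/4ℤ × ℤ/4ℤ × ℤ/2ℤ × ℤ/2ℤ for the bilinear cocycle (-1)^(m₁'k₂ + m₂'k₁).) -/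
open Kronecker

set_option maxHeartbeats 1600000 in
theorem irreducible_projective_rep_example_gamma
    (Z X : Matrix (Fin 2) (Fin 2) ℂ)
    (hZ : Z = !![1, 0; 0, -1]) (hX : X = !![0, 1; 1, 0])
    (γ : ZMod 4 × ZMod 4 × ZMod 2 × ZMod 2 → Matrix (Fin 2 × Fin 2) (Fin 2 × Fin 2) ℂ)
    (hγ : ∀ (m₁ m₂ : ZMod 4) (k₁ k₂ : ZMod 2),
      γ (m₁, m₂, k₁, k₂) = (Z ^ m₁.val * X ^ k₂.val) ⊗ₖ (Z ^ m₂.val * X ^ k₁.val)) :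
    γ 0 = 1 ∧
    (∀ (m₁ m₂ m₁' m₂' : ZMod 4) (k₁ k₂ k₁' k₂' : ZMod 2),
      γ (m₁, m₂, k₁, k₂) * γ (m₁', m₂', k₁', k₂') =
        ((-1 : ℂ) ^ (m₁'.val * k₂.val + m₂'.val * k₁.val)) •
          γ (m₁ + m₁', m₂ + m₂', k₁ + k₁', k₂ + k₂')) ∧
    (∀ W : Submodule ℂ (Fin 2 × Fin 2 → ℂ),
      (∀ g, (γ g).mulVec '' (W : Set (Fin 2 × Fin 2 → ℂ)) ⊆ (W : Set (Fin 2 × Fin 2 → ℂ))) →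
        W = ⊥ ∨ W = ⊤) := by
  -- basic matrix facts
  have hX2 : X ^ 2 = 1 := by
    rw [hX]; ext i j
    fin_cases i <;> fin_cases j <;>
      simp [Matrix.mul_apply, Fin.sum_univ_two, pow_succ, Matrix.one_apply]
  have hZ4 : Z ^ 4 = 1 := by
    rw [hZ]; ext i j
    fin_cases i <;> fin_cases j <;>
      simp [Matrix.mul_apply, Fin.sum_univ_two, pow_succ, Matrix.one_apply]
  have hXZ : X * Z = -(Z * X) := by
    rw [hZ, hX]; ext i j
    fin_cases i <;> fin_cases j <;>
      simp [Matrix.mul_apply, Fin.sum_univ_two]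
  -- commutation relation
  have comm : ∀ k m : ℕ, X ^ k * Z ^ m = (-1 : ℂ) ^ (m * k) • (Z ^ m * X ^ k) := by
    have h1 : ∀ m : ℕ, X * Z ^ m = (-1 : ℂ) ^ m • (Z ^ m * X) := by
      intro m
      induction m with
      | zero => simp
      | succ n ih =>
        rw [pow_succ, ← mul_assoc, ih, smul_mul_assoc, mul_assoc, hXZ, pow_succ]
        simp [mul_assoc, smul_smul, mul_comm]
    intro k m
    induction k with
    | zero => simp
    | succ n ih =>
      rw [pow_succ, mul_assoc, h1, mul_smul_comm, ← mul_assoc, ih, smul_mul_assoc,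
        smul_smul, ← pow_add, mul_assoc, ← pow_succ, Nat.mul_succ, Nat.add_comm (m * n) m]
  refine ⟨?_, ?_, ?_⟩
  · -- part (a)
    have h0 : γ 0 = γ (0, 0, 0, 0) := rfl
    rw [h0, hγ]
    simp [Matrix.one_kronecker_one]
  · -- part (b)
    have h4 : ∀ m m' : ZMod 4, Z ^ (m + m').val = Z ^ m.val * Z ^ m'.val := by
      intro m m'
      rw [ZMod.val_add, ← pow_eq_pow_mod _ hZ4, pow_add]
    have h2 : ∀ k k' : ZMod 2, X ^ (k + k').val = X ^ k.val * X ^ k'.val := by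
      intro k k'
      rw [ZMod.val_add, ← pow_eq_pow_mod _ hX2, pow_add]
    have key : ∀ p q r s : ℕ, (Z ^ p * X ^ q) * (Z ^ r * X ^ s) =
        (-1 : ℂ) ^ (r * q) • (Z ^ p * Z ^ r * (X ^ q * X ^ s)) := by
      intro p q r s
      rw [mul_assoc, ← mul_assoc (X ^ q), comm q r, smul_mul_assoc, mul_smul_comm,
        ← mul_assoc]
      simp [mul_assoc]
    intro m₁ m₂ m₁' m₂' k₁ k₂ k₁' k₂'
    rw [hγ, hγ, hγ, ← Matrix.mul_kronecker_mul, key, key, Matrix.smul_kronecker,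
      Matrix.kronecker_smul, smul_smul, ← pow_add, h4, h4, h2, h2]
  · -- part (c): irreducibility
    intro W hW
    by_cases hbot : W = ⊥
    · exact Or.inl hbot
    right
    have hstep : ∀ g w, w ∈ W → (γ g).mulVec w ∈ W := fun g w hw => hW g ⟨w, hw, rfl⟩
    -- explicit matrices
    have hAe : γ (1, 0, 0, 0) = Z ⊗ₖ (1 : Matrix (Fin 2) (Fin 2) ℂ) := by
      rw [hγ]; norm_num [show ((1 : ZMod 4)).val = 1 from rfl]
    have hBe : γ (0, 1, 0, 0) = (1 : Matrix (Fin 2) (Fin 2) ℂ) ⊗ₖ Z := by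
      rw [hγ]; norm_num [show ((1 : ZMod 4)).val = 1 from rfl]
    have hCe : γ (0, 0, 1, 0) = (1 : Matrix (Fin 2) (Fin 2) ℂ) ⊗ₖ X := by
      rw [hγ]; norm_num [show ((1 : ZMod 2)).val = 1 from rfl]
    have hDe : γ (0, 0, 0, 1) = X ⊗ₖ (1 : Matrix (Fin 2) (Fin 2) ℂ) := by
      rw [hγ]; norm_num [show ((1 : ZMod 2)).val = 1 from rfl]
    -- a nonzero vector in W
    obtain ⟨v, hv, hv0⟩ := Submodule.exists_mem_ne_zero_of_ne_bot hbot
    obtain ⟨p, hp⟩ : ∃ p, v p ≠ 0 := by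
      by_contra h
      push_neg at h
      exact hv0 (funext h)
    obtain ⟨i, j⟩ := p
    -- flip lemmas
    have flipj : ∀ (a b : Fin 2), ((1 : Matrix (Fin 2) (Fin 2) ℂ) ⊗ₖ X).mulVec
        (Pi.single ((a, b) : Fin 2 × Fin 2) (1 : ℂ)) =
        Pi.single ((a, if b = 0 then 1 else 0) : Fin 2 × Fin 2) (1 : ℂ) := by
      intro a b
      funext q
      obtain ⟨c, d⟩ := q
      fin_cases a <;> fin_cases b <;> fin_cases c <;> fin_cases d <;>
        simp [Matrix.mulVec, dotProduct, Fintype.sum_prod_type, Fin.sum_univ_two,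
          hX, Matrix.one_apply, Pi.single_apply]
    have flipi : ∀ (a b : Fin 2), (X ⊗ₖ (1 : Matrix (Fin 2) (Fin 2) ℂ)).mulVec
        (Pi.single ((a, b) : Fin 2 × Fin 2) (1 : ℂ)) =
        Pi.single (((if a = 0 then 1 else 0), b) : Fin 2 × Fin 2) (1 : ℂ) := by
      intro a b
      funext q
      obtain ⟨c, d⟩ := q
      fin_cases a <;> fin_cases b <;> fin_cases c <;> fin_cases d <;>
        simp [Matrix.mulVec, dotProduct, Fintype.sum_prod_type, Fin.sum_univ_two,
          hX, Matrix.one_apply, Pi.single_apply]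
    -- single (i,j) ∈ W
    have hsingle : Pi.single ((i, j) : Fin 2 × Fin 2) (1 : ℂ) ∈ W := by
      set s1 : ℂ := if i = 0 then 1 else -1 with hs1
      set s2 : ℂ := if j = 0 then 1 else -1 with hs2
      set w1 : Fin 2 × Fin 2 → ℂ :=
        v + s1 • (Z ⊗ₖ (1 : Matrix (Fin 2) (Fin 2) ℂ)).mulVec v with hw1
      set w2 : Fin 2 × Fin 2 → ℂ :=
        w1 + s2 • ((1 : Matrix (Fin 2) (Fin 2) ℂ) ⊗ₖ Z).mulVec w1 with hw2
      have hw1m : w1 ∈ W := by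
        refine W.add_mem hv (W.smul_mem _ ?_)
        have := hstep (1, 0, 0, 0) v hv
        rwa [hAe] at this
      have hw2m : w2 ∈ W := by
        refine W.add_mem hw1m (W.smul_mem _ ?_)
        have := hstep (0, 1, 0, 0) w1 hw1m
        rwa [hBe] at this
      have hkey : w2 = Pi.single (i, j) (4 * v (i, j)) := by
        funext q
        obtain ⟨c, d⟩ := q
        rw [hw2, hw1, hs1, hs2]
        fin_cases i <;> fin_cases j <;> fin_cases c <;> fin_cases d <;>
          · simp [Matrix.mulVec, dotProduct, Fintype.sum_prod_type, Fin.sum_univ_two,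
              hZ, Matrix.one_apply, Pi.single_apply]
            try ring
      have hne : (4 * v (i, j)) ≠ 0 := by
        simp [hp]
      have h5 : ((4 * v (i, j))⁻¹ • w2 : Fin 2 × Fin 2 → ℂ) = Pi.single (i, j) 1 := by
        rw [hkey, ← Pi.single_smul, smul_eq_mul, inv_mul_cancel₀ hne]
      rw [← h5]
      exact W.smul_mem _ hw2m
    -- all singles ∈ W
    have hall : ∀ q : Fin 2 × Fin 2, Pi.single q (1 : ℂ) ∈ W := by
      have m2 : Pi.single ((i, if j = 0 then 1 else 0) : Fin 2 × Fin 2) (1 : ℂ) ∈ W := by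
        have := hstep (0, 0, 1, 0) _ hsingle
        rwa [hCe, flipj] at this
      have m3 : Pi.single (((if i = 0 then 1 else 0), j) : Fin 2 × Fin 2) (1 : ℂ) ∈ W := by
        have := hstep (0, 0, 0, 1) _ hsingle
        rwa [hDe, flipi] at this
      have m4 : Pi.single (((if i = 0 then 1 else 0), if j = 0 then 1 else 0) : Fin 2 × Fin 2)
          (1 : ℂ) ∈ W := by
        have := hstep (0, 0, 0, 1) _ m2
        rwa [hDe, flipi] at this
      have key2 : ∀ x y : Fin 2, y = x ∨ y = (if x = 0 then 1 else 0) := by decide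
      rintro ⟨a, b⟩
      rcases key2 i a with ha | ha <;> rcases key2 j b with hb | hb <;>
        subst ha <;> subst hb <;> assumption
    -- conclude W = ⊤
    rw [Submodule.eq_top_iff']
    intro u
    have hsm : ∀ q : Fin 2 × Fin 2, Pi.single q (u q) ∈ W := by
      intro q
      have h1 := W.smul_mem (u q) (hall q)
      have h2 : Pi.single q (u q) = u q • (Pi.single q 1 : Fin 2 × Fin 2 → ℂ) := by
        rw [← Pi.single_smul, smul_eq_mul, mul_one]
      rwa [h2]
    have hu : ∑ q : Fin 2 × Fin 2, Pi.single q (u q) = u := Finset.univ_sum_single u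
    rw [← hu]
    exact Submodule.sum_mem _ fun q _ => hsm q
end

section
/- Let p be a prime and let B : Matrix (Fin t) (Fin s) (ZMod p) have rank n over the field ZMod p. For D₁, D₂ : Fin s → ZMod p let B'' D₁ D₂ : Matrix (Fin (t + 2)) (Fin s) (ZMod p) be the matrix whose first t rows are those of B and whose last two rows are D₁ and D₂. Then the number of pairs (D₁, D₂) with (B'' D₁ D₂).rank = n equals p ^ (2 * n); the number of pairs with rank n + 1 equals p ^ (2 * n) * (p + 1) * (p ^ (s - n) - 1); and the number of pairs with rank n + 2 equals p ^ (2 * n) * (p ^ (s - n) - 1) * (p ^ (s - n) - p). Moreover every pair yields rank n, n + 1, or n + 2. -/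
open Module Submodule

theorem my_range_snoc {α : Type*} {n : ℕ} (f : Fin n → α) (a : α) :
    Set.range (Fin.snoc f a : Fin (n + 1) → α) = insert a (Set.range f) := by
  ext x
  simp only [Set.mem_range, Set.mem_insert_iff]
  constructor
  · rintro ⟨i, rfl⟩
    induction i using Fin.lastCases with
    | last => simp
    | cast j => simp
  · rintro (rfl | ⟨j, rfl⟩)
    · exact ⟨Fin.last n, by simp⟩
    · exact ⟨j.castSucc, by simp⟩

theorem my_sup_span_of_mem {K V : Type*} [Field K] [AddCommGroup V] [Module K V]
    (W : Submodule K V) {v : V} (hv : v ∈ W) : W ⊔ Submodule.span K {v} = W :=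
  sup_eq_left.2 (Submodule.span_le.2 (Set.singleton_subset_iff.2 hv))

theorem my_finrank_sup_of_not_mem {K V : Type*} [Field K] [AddCommGroup V] [Module K V]
    [FiniteDimensional K V] (W : Submodule K V) {v : V} (hv : v ∉ W) :
    finrank K ↥(W ⊔ Submodule.span K {v}) = finrank K ↥W + 1 := by
  have hv0 : v ≠ 0 := fun h => hv (h ▸ W.zero_mem)
  have hdis : Disjoint W (Submodule.span K {v}) :=
    (Submodule.disjoint_span_singleton' hv0).2 hv
  have h := Submodule.finrank_sup_add_finrank_inf_eq W (Submodule.span K {v})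
  rw [hdis.eq_bot, finrank_bot, finrank_span_singleton hv0] at h
  omega

theorem count_two_row_extensions_by_rank
    (p t s n : ℕ) (hp : p.Prime) (B : Matrix (Fin t) (Fin s) (ZMod p)) (hB : B.rank = n) :
    Nat.card {D : (Fin s → ZMod p) × (Fin s → ZMod p) //
        (Matrix.of (Fin.snoc (Fin.snoc (fun i => B i) D.1) D.2) :
          Matrix (Fin (t + 2)) (Fin s) (ZMod p)).rank = n}
      = p ^ (2 * n) ∧
    Nat.card {D : (Fin s → ZMod p) × (Fin s → ZMod p) //
        (Matrix.of (Fin.snoc (Fin.snoc (fun i => B i) D.1) D.2) :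
          Matrix (Fin (t + 2)) (Fin s) (ZMod p)).rank = n + 1}
      = p ^ (2 * n) * (p + 1) * (p ^ (s - n) - 1) ∧
    Nat.card {D : (Fin s → ZMod p) × (Fin s → ZMod p) //
        (Matrix.of (Fin.snoc (Fin.snoc (fun i => B i) D.1) D.2) :
          Matrix (Fin (t + 2)) (Fin s) (ZMod p)).rank = n + 2}
      = p ^ (2 * n) * (p ^ (s - n) - 1) * (p ^ (s - n) - p) ∧
    (∀ D₁ D₂ : Fin s → ZMod p,
      (Matrix.of (Fin.snoc (Fin.snoc (fun i => B i) D₁) D₂) :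
          Matrix (Fin (t + 2)) (Fin s) (ZMod p)).rank = n ∨
      (Matrix.of (Fin.snoc (Fin.snoc (fun i => B i) D₁) D₂) :
          Matrix (Fin (t + 2)) (Fin s) (ZMod p)).rank = n + 1 ∨
      (Matrix.of (Fin.snoc (Fin.snoc (fun i => B i) D₁) D₂) :
          Matrix (Fin (t + 2)) (Fin s) (ZMod p)).rank = n + 2) := by
  haveI : Fact p.Prime := ⟨hp⟩
  classical
  set W : Submodule (ZMod p) (Fin s → ZMod p) := Submodule.span (ZMod p) (Set.range B)
    with hWdef
  have hWn : finrank (ZMod p) ↥W = n := by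
    rw [hWdef, ← hB, Matrix.rank_eq_finrank_span_row]; rfl
  have hns : n ≤ s := by
    have h1 := Submodule.finrank_le W
    rwa [hWn, Module.finrank_fin_fun] at h1
  -- rank of the extended matrix
  have hrank : ∀ D₁ D₂ : Fin s → ZMod p,
      (Matrix.of (Fin.snoc (Fin.snoc (fun i => B i) D₁) D₂) :
        Matrix (Fin (t + 2)) (Fin s) (ZMod p)).rank
      = (if D₁ ∈ W then n else n + 1)
        + (if D₂ ∈ W ⊔ Submodule.span (ZMod p) {D₁} then 0 else 1) := by
    intro D₁ D₂
    rw [Matrix.rank_eq_finrank_span_row]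
    have hr : Set.range (Matrix.of (Fin.snoc (Fin.snoc (fun i => B i) D₁) D₂) :
        Matrix (Fin (t + 2)) (Fin s) (ZMod p)).row = insert D₂ (insert D₁ (Set.range B)) := by
      show Set.range (Fin.snoc (Fin.snoc (fun i => B i) D₁) D₂) = _
      rw [my_range_snoc, my_range_snoc]
    rw [hr, Submodule.span_insert, Submodule.span_insert,
      sup_comm (Submodule.span (ZMod p) {D₂}), sup_comm (Submodule.span (ZMod p) {D₁}), ← hWdef]
    by_cases h2 : D₂ ∈ W ⊔ Submodule.span (ZMod p) {D₁}
    · rw [if_pos h2, my_sup_span_of_mem _ h2, add_zero]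
      by_cases h1 : D₁ ∈ W
      · rw [if_pos h1, my_sup_span_of_mem _ h1, hWn]
      · rw [if_neg h1, my_finrank_sup_of_not_mem _ h1, hWn]
    · rw [if_neg h2, my_finrank_sup_of_not_mem _ h2]
      by_cases h1 : D₁ ∈ W
      · rw [if_pos h1, my_sup_span_of_mem _ h1, hWn]
      · rw [if_neg h1, my_finrank_sup_of_not_mem _ h1, hWn]
  simp only [hrank]
  -- counting helpers
  have hin : ∀ W' : Submodule (ZMod p) (Fin s → ZMod p),
      Nat.card {x : Fin s → ZMod p // x ∈ W'} = p ^ finrank (ZMod p) ↥W' := by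
    intro W'
    rw [Nat.card_eq_fintype_card]
    rw [card_eq_pow_finrank (K := ZMod p) (V := ↥W'), ZMod.card]
  have hVc : Fintype.card (Fin s → ZMod p) = p ^ s := by
    rw [card_eq_pow_finrank (K := ZMod p) (V := Fin s → ZMod p), ZMod.card,
      Module.finrank_fin_fun]
  have hout : ∀ W' : Submodule (ZMod p) (Fin s → ZMod p),
      Nat.card {x : Fin s → ZMod p // x ∉ W'} = p ^ s - p ^ finrank (ZMod p) ↥W' := by
    intro W'
    rw [Nat.card_eq_fintype_card, Fintype.card_subtype_compl, hVc,
      ← Nat.card_eq_fintype_card, hin]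
  have hsigma : ∀ P : (Fin s → ZMod p) → (Fin s → ZMod p) → Prop,
      Nat.card {D : (Fin s → ZMod p) × (Fin s → ZMod p) // P D.1 D.2}
        = ∑ D₁ : Fin s → ZMod p, Nat.card {D₂ : Fin s → ZMod p // P D₁ D₂} := by
    intro P
    rw [Nat.card_congr (Equiv.subtypeProdEquivSigmaSubtype P), Nat.card_eq_fintype_card,
      Fintype.card_sigma]
    exact Finset.sum_congr rfl fun x _ => (Nat.card_eq_fintype_card).symm
  have hsum : ∀ a b : ℕ,
      (∑ x : Fin s → ZMod p, if x ∈ W then a else b) = p ^ n * a + (p ^ s - p ^ n) * b := by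
    intro a b
    rw [Finset.sum_ite, Finset.sum_const, Finset.sum_const, smul_eq_mul, smul_eq_mul]
    have h1 : (Finset.univ.filter (fun x : Fin s → ZMod p => x ∈ W)).card = p ^ n := by
      rw [← Fintype.card_subtype, ← Nat.card_eq_fintype_card, hin, hWn]
    have h2 : (Finset.univ.filter (fun x : Fin s → ZMod p => ¬ x ∈ W)).card
        = p ^ s - p ^ n := by
      rw [← Fintype.card_subtype, ← Nat.card_eq_fintype_card]
      have h := hout W
      rwa [hWn] at h
    rw [h1, h2]
  have hq : p ^ s = p ^ n * p ^ (s - n) := by rw [← pow_add, Nat.add_sub_cancel' hns]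
  have hW1 : ∀ D₁ : Fin s → ZMod p, D₁ ∉ W →
      finrank (ZMod p) ↥(W ⊔ Submodule.span (ZMod p) {D₁}) = n + 1 := by
    intro D₁ h1
    rw [my_finrank_sup_of_not_mem _ h1, hWn]
  refine ⟨?_, ?_, ?_, ?_⟩
  · -- rank = n
    refine (hsigma (fun D₁ D₂ => (if D₁ ∈ W then n else n + 1)
        + (if D₂ ∈ W ⊔ Submodule.span (ZMod p) {D₁} then 0 else 1) = n)).trans ?_
    have step : ∀ D₁ : Fin s → ZMod p,
        Nat.card {D₂ : Fin s → ZMod p //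
          (if D₁ ∈ W then n else n + 1)
            + (if D₂ ∈ W ⊔ Submodule.span (ZMod p) {D₁} then 0 else 1) = n}
        = (if D₁ ∈ W then p ^ n else 0) := by
      intro D₁
      by_cases h1 : D₁ ∈ W
      · simp only [if_pos h1]
        have he : ∀ D₂ : Fin s → ZMod p,
            (n + (if D₂ ∈ W ⊔ Submodule.span (ZMod p) {D₁} then 0 else 1) = n) ↔ D₂ ∈ W := by
          intro D₂
          rw [my_sup_span_of_mem _ h1]
          split_ifs with h2 <;> simp [h2]
        rw [Nat.card_congr (Equiv.subtypeEquivRight he), hin, hWn]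
      · simp only [if_neg h1]
        have : IsEmpty {D₂ : Fin s → ZMod p //
            n + 1 + (if D₂ ∈ W ⊔ Submodule.span (ZMod p) {D₁} then 0 else 1) = n} := by
          refine ⟨fun x => ?_⟩
          obtain ⟨D₂, hD⟩ := x
          split_ifs at hD <;> omega
        exact Nat.card_of_isEmpty
    rw [Finset.sum_congr rfl fun D₁ _ => step D₁, hsum, mul_zero, add_zero, two_mul, pow_add]
  · -- rank = n + 1
    refine (hsigma (fun D₁ D₂ => (if D₁ ∈ W then n else n + 1)
        + (if D₂ ∈ W ⊔ Submodule.span (ZMod p) {D₁} then 0 else 1) = n + 1)).trans ?_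
    have step : ∀ D₁ : Fin s → ZMod p,
        Nat.card {D₂ : Fin s → ZMod p //
          (if D₁ ∈ W then n else n + 1)
            + (if D₂ ∈ W ⊔ Submodule.span (ZMod p) {D₁} then 0 else 1) = n + 1}
        = (if D₁ ∈ W then p ^ s - p ^ n else p ^ (n + 1)) := by
      intro D₁
      by_cases h1 : D₁ ∈ W
      · simp only [if_pos h1]
        have he : ∀ D₂ : Fin s → ZMod p,
            (n + (if D₂ ∈ W ⊔ Submodule.span (ZMod p) {D₁} then 0 else 1) = n + 1)
            ↔ D₂ ∉ W := by
          intro D₂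
          rw [my_sup_span_of_mem _ h1]
          split_ifs with h2 <;> simp [h2]
        rw [Nat.card_congr (Equiv.subtypeEquivRight he), hout, hWn]
      · simp only [if_neg h1]
        have he : ∀ D₂ : Fin s → ZMod p,
            (n + 1 + (if D₂ ∈ W ⊔ Submodule.span (ZMod p) {D₁} then 0 else 1) = n + 1)
            ↔ D₂ ∈ W ⊔ Submodule.span (ZMod p) {D₁} := by
          intro D₂
          split_ifs with h2 <;> simp [h2]
        rw [Nat.card_congr (Equiv.subtypeEquivRight he), hin, hW1 D₁ h1]
    rw [Finset.sum_congr rfl fun D₁ _ => step D₁, hsum, hq]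
    have h3 : p ^ n * p ^ (s - n) - p ^ n = p ^ n * (p ^ (s - n) - 1) := by
      rw [Nat.mul_sub, mul_one]
    rw [h3, two_mul, pow_add, pow_succ]
    ring
  · -- rank = n + 2
    refine (hsigma (fun D₁ D₂ => (if D₁ ∈ W then n else n + 1)
        + (if D₂ ∈ W ⊔ Submodule.span (ZMod p) {D₁} then 0 else 1) = n + 2)).trans ?_
    have step : ∀ D₁ : Fin s → ZMod p,
        Nat.card {D₂ : Fin s → ZMod p //
          (if D₁ ∈ W then n else n + 1)
            + (if D₂ ∈ W ⊔ Submodule.span (ZMod p) {D₁} then 0 else 1) = n + 2}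
        = (if D₁ ∈ W then 0 else p ^ s - p ^ (n + 1)) := by
      intro D₁
      by_cases h1 : D₁ ∈ W
      · simp only [if_pos h1]
        have : IsEmpty {D₂ : Fin s → ZMod p //
            n + (if D₂ ∈ W ⊔ Submodule.span (ZMod p) {D₁} then 0 else 1) = n + 2} := by
          refine ⟨fun x => ?_⟩
          obtain ⟨D₂, hD⟩ := x
          split_ifs at hD <;> omega
        exact Nat.card_of_isEmpty
      · simp only [if_neg h1]
        have he : ∀ D₂ : Fin s → ZMod p,
            (n + 1 + (if D₂ ∈ W ⊔ Submodule.span (ZMod p) {D₁} then 0 else 1) = n + 2)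
            ↔ D₂ ∉ W ⊔ Submodule.span (ZMod p) {D₁} := by
          intro D₂
          split_ifs with h2 <;> simp [h2]
        rw [Nat.card_congr (Equiv.subtypeEquivRight he), hout, hW1 D₁ h1]
    rw [Finset.sum_congr rfl fun D₁ _ => step D₁, hsum, hq, mul_zero, zero_add]
    have h3 : p ^ n * p ^ (s - n) - p ^ n = p ^ n * (p ^ (s - n) - 1) := by
      rw [Nat.mul_sub, mul_one]
    have h4 : p ^ n * p ^ (s - n) - p ^ (n + 1) = p ^ n * (p ^ (s - n) - p) := by
      rw [Nat.mul_sub, pow_succ]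
    rw [h3, h4, two_mul, pow_add]
    ring
  · intro D₁ D₂
    split_ifs <;> omega
end

section
/- Let p be a prime and let B : Matrix (Fin t) (Fin s) (ZMod p) have rank n over the field ZMod p. For D₁ : Fin t → ZMod p, D₂ : Fin s → ZMod p and d : ZMod p, let M D₁ D₂ d : Matrix (Fin (t + 1)) (Fin (s + 1)) (ZMod p) be the bordered matrix whose upper-left t×s block is B, whose last column has upper part D₁, whose last row has left part D₂, and whose (t+1, s+1) entry is d. Then the number of triples (D₁, D₂, d) with (M D₁ D₂ d).rank = n equals p ^ (2 * n); the number with rank n + 1 equals p ^ (2 * n) * (p ^ (t - n + 1) + p ^ (s - n + 1) - p - 1); and the number with rank n + 2 equals p ^ (2 * n + 1) * (p ^ (t - n) - 1) * (p ^ (s - n) - 1). Moreover every triple yields rank n, n + 1, or n + 2. -/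
set_option linter.unusedSectionVars false

open Matrix Submodule Module
open scoped Classical

section Helpers

variable {K : Type*} [Field K] {m n m' n' : Type*} [Fintype m] [Fintype n] [Fintype m'] [Fintype n']

omit [Fintype m] [Fintype m'] in
lemma rank_reindex' (e₁ : m ≃ m') (e₂ : n ≃ n') (A : Matrix m n K) :
    (Matrix.reindex e₁ e₂ A).rank = A.rank := by
  rw [Matrix.rank, Matrix.rank, Matrix.mulVecLin_reindex, LinearMap.range_comp,
    LinearMap.range_comp, LinearEquiv.range, Submodule.map_top, LinearEquiv.finrank_map_eq]

omit [Fintype m] [Fintype n] [Fintype m'] [Fintype n'] in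
lemma finrank_sup_span_singleton {V : Type*} [AddCommGroup V] [Module K V]
    [FiniteDimensional K V] (q : Submodule K V) {x : V} (hx : x ∉ q) :
    finrank K ↥(q ⊔ K ∙ x) = finrank K q + 1 := by
  have hx0 : x ≠ 0 := fun h => hx (h ▸ q.zero_mem)
  have hinf : q ⊓ (K ∙ x) = ⊥ := by
    rw [eq_bot_iff]
    rintro y ⟨hyq, hyx⟩
    obtain ⟨c, rfl⟩ := Submodule.mem_span_singleton.mp hyx
    rcases eq_or_ne c 0 with rfl | hc
    · simp
    · exfalso
      apply hx
      have h2 := q.smul_mem c⁻¹ hyq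
      rwa [smul_smul, inv_mul_cancel₀ hc, one_smul] at h2
  have h := Submodule.finrank_sup_add_finrank_inf_eq q (K ∙ x)
  rw [hinf, finrank_bot, finrank_span_singleton hx0] at h
  omega

omit [Fintype m'] [Fintype n'] in
lemma rank_eq_finrank_span_row_T (A : Matrix m n K) :
    A.rank = finrank K (span K (Set.range A)) := Matrix.rank_eq_finrank_span_row A

omit [Fintype m'] [Fintype n'] in
lemma rank_fromRows_row (A : Matrix m n K) (r : n → K) :
    (Matrix.fromRows A (Matrix.replicateRow (Fin 1) r)).rank =
      if r ∈ span K (Set.range A) then A.rank else A.rank + 1 := by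
  have hr : Set.range (Matrix.fromRows A (Matrix.replicateRow (Fin 1) r)) = Set.range A ∪ {r} := by
    have h1 : Set.range (Matrix.fromRows A (Matrix.replicateRow (Fin 1) r)) =
        Set.range A ∪ Set.range (Matrix.replicateRow (Fin 1) r) := Set.Sum.elim_range _ _
    rw [h1]
    congr 1
    exact Set.range_const
  rw [rank_eq_finrank_span_row_T, hr, Submodule.span_union, rank_eq_finrank_span_row_T]
  by_cases h : r ∈ span K (Set.range A)
  · rw [if_pos h]
    have he : span K (Set.range A) ⊔ span K {r} = span K (Set.range A) :=
      sup_eq_left.mpr ((Submodule.span_singleton_le_iff_mem _ _).mpr h)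
    rw [he]
  · rw [if_neg h]
    exact finrank_sup_span_singleton _ h

omit [Fintype m'] [Fintype n'] in
lemma rank_fromColumns_col (A : Matrix m n K) (c : m → K) :
    (Matrix.fromCols A (Matrix.replicateCol (Fin 1) c)).rank =
      if c ∈ span K (Set.range Aᵀ) then A.rank else A.rank + 1 := by
  rw [← Matrix.rank_transpose, Matrix.transpose_fromCols, Matrix.transpose_replicateCol,
    rank_fromRows_row, Matrix.rank_transpose]

omit [Fintype m] [Fintype n] [Fintype m'] [Fintype n'] in
lemma proj_mem_span {α β : Type*} {S : Set ((α ⊕ β) → K)} {x : (α ⊕ β) → K}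
    (hx : x ∈ span K S) :
    (x ∘ Sum.inl) ∈ span K ((fun y : (α ⊕ β) → K => y ∘ Sum.inl) '' S) := by
  have h := Submodule.mem_map_of_mem (f := LinearMap.funLeft K K (Sum.inl : α → α ⊕ β)) hx
  rw [Submodule.map_span] at h
  exact h

omit [Fintype m] [Fintype m'] [Fintype n'] in
lemma range_mulVecLin_T (M : Matrix m n K) :
    LinearMap.range M.mulVecLin = span K (Set.range Mᵀ) := Matrix.range_mulVecLin M

end Helpers

section Core

variable {K : Type*} [Field K] {m n : Type*} [Fintype m] [Fintype n]
variable (B : Matrix m n K) (D₁ : m → K) (D₂ : n → K) (d : K)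

omit [Field K] [Fintype m] [Fintype n] in
lemma decompR : Matrix.fromBlocks B (Matrix.replicateCol (Fin 1) D₁) (Matrix.replicateRow (Fin 1) D₂)
      (Matrix.of fun (_ : Fin 1) (_ : Fin 1) => d)
    = Matrix.fromRows (Matrix.fromCols B (Matrix.replicateCol (Fin 1) D₁))
        (Matrix.replicateRow (Fin 1) (Sum.elim D₂ fun _ => d)) := by
  rw [← Matrix.fromRows_fromCols_eq_fromBlocks]
  congr 1

omit [Field K] [Fintype m] [Fintype n] in
lemma decompC : Matrix.fromBlocks B (Matrix.replicateCol (Fin 1) D₁) (Matrix.replicateRow (Fin 1) D₂)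
      (Matrix.of fun (_ : Fin 1) (_ : Fin 1) => d)
    = Matrix.fromCols (Matrix.fromRows B (Matrix.replicateRow (Fin 1) D₂))
        (Matrix.replicateCol (Fin 1) (Sum.elim D₁ fun _ => d)) := by
  rw [← Matrix.fromCols_fromRows_eq_fromBlocks]
  ext i j
  cases i <;> rfl

lemma notmem_row_ext (h2 : D₂ ∉ LinearMap.range Bᵀ.mulVecLin) :
    Sum.elim D₂ (fun _ => d) ∉
      span K (Set.range (Matrix.fromCols B (Matrix.replicateCol (Fin 1) D₁))) := by
  intro hmem
  apply h2
  rw [range_mulVecLin_T, transpose_transpose]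
  have h := proj_mem_span hmem
  have him : ((fun y : (n ⊕ Fin 1) → K => y ∘ Sum.inl) ''
      Set.range (Matrix.fromCols B (Matrix.replicateCol (Fin 1) D₁))) ⊆ Set.range B := by
    rintro _ ⟨_, ⟨i, rfl⟩, rfl⟩
    exact ⟨i, rfl⟩
  exact Submodule.span_mono him h

/-- Case: `D₂` not in the row space. -/
lemma rank_case_notrow (h2 : D₂ ∉ LinearMap.range Bᵀ.mulVecLin) :
    (Matrix.fromBlocks B (Matrix.replicateCol (Fin 1) D₁) (Matrix.replicateRow (Fin 1) D₂)
        (Matrix.of fun (_ : Fin 1) (_ : Fin 1) => d)).rank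
      = (if D₁ ∈ LinearMap.range B.mulVecLin then B.rank else B.rank + 1) + 1 := by
  rw [decompR, rank_fromRows_row, if_neg (notmem_row_ext B D₁ D₂ d h2),
    rank_fromColumns_col, ← range_mulVecLin_T]

/-- Case: `D₂` in the row space. -/
lemma rank_case_row (h2 : D₂ ∈ LinearMap.range Bᵀ.mulVecLin) :
    (Matrix.fromBlocks B (Matrix.replicateCol (Fin 1) D₁) (Matrix.replicateRow (Fin 1) D₂)
        (Matrix.of fun (_ : Fin 1) (_ : Fin 1) => d)).rank
      = if Sum.elim D₁ (fun _ => d) ∈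
            LinearMap.range (Matrix.fromRows B (Matrix.replicateRow (Fin 1) D₂)).mulVecLin
        then B.rank else B.rank + 1 := by
  have hA : (Matrix.fromRows B (Matrix.replicateRow (Fin 1) D₂)).rank = B.rank := by
    rw [rank_fromRows_row, if_pos]
    rwa [← transpose_transpose B, ← range_mulVecLin_T]
  rw [decompC, rank_fromColumns_col, ← range_mulVecLin_T, hA]

lemma mem_ext_iff_of_witness {w : m → K} (hw : Bᵀ *ᵥ w = D₂) {v : n → K}
    (hv : B *ᵥ v = D₁) :
    Sum.elim D₁ (fun _ => d) ∈
        LinearMap.range (Matrix.fromRows B (Matrix.replicateRow (Fin 1) D₂)).mulVecLin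
      ↔ d = w ⬝ᵥ D₁ := by
  constructor
  · rintro ⟨x, hx⟩
    rw [Matrix.mulVecLin_apply, Matrix.fromRows_mulVec, Matrix.replicateRow_mulVec_eq_const] at hx
    have hb : B *ᵥ x = D₁ := funext fun i => congrFun hx (Sum.inl i)
    have hd : D₂ ⬝ᵥ x = d := congrFun hx (Sum.inr 0)
    rw [← hd, ← hw, Matrix.mulVec_transpose, ← Matrix.dotProduct_mulVec, hb]
  · intro hd
    refine ⟨v, ?_⟩
    rw [Matrix.mulVecLin_apply, Matrix.fromRows_mulVec, Matrix.replicateRow_mulVec_eq_const]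
    funext i
    cases i with
    | inl i => exact congrFun hv i
    | inr i =>
      show D₂ ⬝ᵥ v = d
      rw [← hw, Matrix.mulVec_transpose, ← Matrix.dotProduct_mulVec, hv, hd]

lemma notmem_ext_of_not_col (h1 : D₁ ∉ LinearMap.range B.mulVecLin) :
    Sum.elim D₁ (fun _ => d) ∉
      LinearMap.range (Matrix.fromRows B (Matrix.replicateRow (Fin 1) D₂)).mulVecLin := by
  rintro ⟨x, hx⟩
  rw [Matrix.mulVecLin_apply, Matrix.fromRows_mulVec] at hx
  exact h1 ⟨x, funext fun i => congrFun hx (Sum.inl i)⟩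

end Core

/-- The bordered `(t+1) × (s+1)` matrix whose upper-left `t × s` block is `B`, whose last
column has upper part `D₁`, whose last row has left part `D₂`, and whose corner entry is `d`. -/
def borderedMatrix {p t s : ℕ} (B : Matrix (Fin t) (Fin s) (ZMod p))
    (D₁ : Fin t → ZMod p) (D₂ : Fin s → ZMod p) (d : ZMod p) :
    Matrix (Fin (t + 1)) (Fin (s + 1)) (ZMod p) :=
  Matrix.reindex finSumFinEquiv finSumFinEquiv
    (Matrix.fromBlocks B (Matrix.of fun i (_ : Fin 1) => D₁ i)
      (Matrix.of fun (_ : Fin 1) j => D₂ j) (Matrix.of fun (_ : Fin 1) (_ : Fin 1) => d))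

theorem count_bordered_extensions_by_rank
    (p t s n : ℕ) (hp : p.Prime) (hn : n ≤ min t s)
    (B : Matrix (Fin t) (Fin s) (ZMod p)) (hB : B.rank = n) :
    Nat.card {x : (Fin t → ZMod p) × (Fin s → ZMod p) × ZMod p //
        (borderedMatrix B x.1 x.2.1 x.2.2).rank = n} = p ^ (2 * n) ∧
    Nat.card {x : (Fin t → ZMod p) × (Fin s → ZMod p) × ZMod p //
        (borderedMatrix B x.1 x.2.1 x.2.2).rank = n + 1}
      = p ^ (2 * n) * (p ^ (t - n + 1) + p ^ (s - n + 1) - p - 1) ∧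
    Nat.card {x : (Fin t → ZMod p) × (Fin s → ZMod p) × ZMod p //
        (borderedMatrix B x.1 x.2.1 x.2.2).rank = n + 2}
      = p ^ (2 * n + 1) * (p ^ (t - n) - 1) * (p ^ (s - n) - 1) ∧
    (∀ (D₁ : Fin t → ZMod p) (D₂ : Fin s → ZMod p) (d : ZMod p),
      (borderedMatrix B D₁ D₂ d).rank = n ∨
      (borderedMatrix B D₁ D₂ d).rank = n + 1 ∨
      (borderedMatrix B D₁ D₂ d).rank = n + 2) := by
  haveI : Fact p.Prime := ⟨hp⟩
  classical
  have hnt : n ≤ t := le_trans hn (min_le_left _ _)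
  have hns : n ≤ s := le_trans hn (min_le_right _ _)
  have hp2 : 2 ≤ p := hp.two_le
  set T := (Fin t → ZMod p) × (Fin s → ZMod p) × ZMod p with hT
  -- reduce to block form
  have hbm : ∀ (D₁ : Fin t → ZMod p) (D₂ : Fin s → ZMod p) (d : ZMod p),
      (borderedMatrix B D₁ D₂ d).rank =
      (Matrix.fromBlocks B (Matrix.replicateCol (Fin 1) D₁) (Matrix.replicateRow (Fin 1) D₂)
        (Matrix.of fun (_ : Fin 1) (_ : Fin 1) => d)).rank := fun D₁ D₂ d =>
    rank_reindex' finSumFinEquiv finSumFinEquiv _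
  let dstar : (Fin t → ZMod p) → (Fin s → ZMod p) → ZMod p := fun D₁ D₂ =>
    if h : D₂ ∈ LinearMap.range Bᵀ.mulVecLin then
      (LinearMap.mem_range.mp h).choose ⬝ᵥ D₁ else 0
  -- the rank in all cases
  have hrank : ∀ (D₁ : Fin t → ZMod p) (D₂ : Fin s → ZMod p) (d : ZMod p),
      (borderedMatrix B D₁ D₂ d).rank =
      if D₂ ∈ LinearMap.range Bᵀ.mulVecLin then
        (if D₁ ∈ LinearMap.range B.mulVecLin ∧ d = dstar D₁ D₂ then n else n + 1)
      else (if D₁ ∈ LinearMap.range B.mulVecLin then n + 1 else n + 2) := by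
    intro D₁ D₂ d
    rw [hbm]
    by_cases hR : D₂ ∈ LinearMap.range Bᵀ.mulVecLin
    · rw [if_pos hR, rank_case_row B D₁ D₂ d hR, hB]
      have hw : Bᵀ *ᵥ (LinearMap.mem_range.mp hR).choose = D₂ := by
        have := (LinearMap.mem_range.mp hR).choose_spec
        rwa [Matrix.mulVecLin_apply] at this
      have hds : dstar D₁ D₂ = (LinearMap.mem_range.mp hR).choose ⬝ᵥ D₁ := dif_pos hR
      by_cases hC : D₁ ∈ LinearMap.range B.mulVecLin
      · obtain ⟨v, hv⟩ := LinearMap.mem_range.mp hC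
        rw [Matrix.mulVecLin_apply] at hv
        by_cases hd : d = (LinearMap.mem_range.mp hR).choose ⬝ᵥ D₁
        · rw [if_pos ((mem_ext_iff_of_witness B D₁ D₂ d hw hv).mpr hd),
            if_pos ⟨hC, by rw [hds]; exact hd⟩]
        · rw [if_neg (fun hcon => hd ((mem_ext_iff_of_witness B D₁ D₂ d hw hv).mp hcon)),
            if_neg (fun hcon => hd (by rw [← hds]; exact hcon.2))]
      · rw [if_neg (notmem_ext_of_not_col B D₁ D₂ d hC), if_neg (fun hcon => hC hcon.1)]
    · rw [if_neg hR, rank_case_notrow B D₁ D₂ d hR, hB]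
      by_cases hC : D₁ ∈ LinearMap.range B.mulVecLin
      · rw [if_pos hC, if_pos hC]
      · rw [if_neg hC, if_neg hC]
  -- classification iffs
  have keyT : ∀ (D₁ : Fin t → ZMod p) (D₂ : Fin s → ZMod p) (d : ZMod p),
      (borderedMatrix B D₁ D₂ d).rank = n ∨
      (borderedMatrix B D₁ D₂ d).rank = n + 1 ∨
      (borderedMatrix B D₁ D₂ d).rank = n + 2 := by
    intro D₁ D₂ d
    rw [hrank]
    split_ifs <;> simp
  have key0 : ∀ (D₁ : Fin t → ZMod p) (D₂ : Fin s → ZMod p) (d : ZMod p),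
      ((borderedMatrix B D₁ D₂ d).rank = n ↔
        (D₁ ∈ LinearMap.range B.mulVecLin ∧ D₂ ∈ LinearMap.range Bᵀ.mulVecLin
          ∧ d = dstar D₁ D₂)) := by
    intro D₁ D₂ d
    rw [hrank]
    split_ifs with h1 h2 h3
    · exact ⟨fun _ => ⟨h2.1, h1, h2.2⟩, fun _ => rfl⟩
    · exact ⟨fun h => absurd h (by omega), fun h => absurd ⟨h.1, h.2.2⟩ h2⟩
    · exact ⟨fun h => absurd h (by omega), fun h => absurd h.2.1 h1⟩
    · exact ⟨fun h => absurd h (by omega), fun h => absurd h.2.1 h1⟩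
  have key2 : ∀ (D₁ : Fin t → ZMod p) (D₂ : Fin s → ZMod p) (d : ZMod p),
      ((borderedMatrix B D₁ D₂ d).rank = n + 2 ↔
        (D₁ ∉ LinearMap.range B.mulVecLin ∧ D₂ ∉ LinearMap.range Bᵀ.mulVecLin)) := by
    intro D₁ D₂ d
    rw [hrank]
    split_ifs with h1 h2 h3
    · exact ⟨fun h => absurd h (by omega), fun h => absurd h1 h.2⟩
    · exact ⟨fun h => absurd h (by omega), fun h => absurd h1 h.2⟩
    · exact ⟨fun h => absurd h (by omega), fun h => absurd h3 h.1⟩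
    · exact ⟨fun _ => ⟨h3, h1⟩, fun _ => rfl⟩
  -- cardinalities of spaces
  have cardC : Nat.card {D₁ : Fin t → ZMod p // D₁ ∈ LinearMap.range B.mulVecLin} = p ^ n := by
    haveI : Fintype ↥(LinearMap.range B.mulVecLin) := Fintype.ofFinite _
    rw [Nat.card_eq_fintype_card]
    rw [show Fintype.card {D₁ : Fin t → ZMod p // D₁ ∈ LinearMap.range B.mulVecLin}
        = Fintype.card ↥(LinearMap.range B.mulVecLin) from rfl]
    rw [card_eq_pow_finrank (K := ZMod p), ZMod.card]
    have hf : finrank (ZMod p) ↥(LinearMap.range B.mulVecLin) = n := hB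
    rw [hf]
  have cardR : Nat.card {D₂ : Fin s → ZMod p // D₂ ∈ LinearMap.range Bᵀ.mulVecLin} = p ^ n := by
    haveI : Fintype ↥(LinearMap.range Bᵀ.mulVecLin) := Fintype.ofFinite _
    rw [Nat.card_eq_fintype_card]
    rw [show Fintype.card {D₂ : Fin s → ZMod p // D₂ ∈ LinearMap.range Bᵀ.mulVecLin}
        = Fintype.card ↥(LinearMap.range Bᵀ.mulVecLin) from rfl]
    rw [card_eq_pow_finrank (K := ZMod p), ZMod.card]
    have h0 := Matrix.rank_transpose B
    rw [hB] at h0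
    have hf : finrank (ZMod p) ↥(LinearMap.range Bᵀ.mulVecLin) = n := h0
    rw [hf]
  have cardFt : Fintype.card (Fin t → ZMod p) = p ^ t := by
    rw [Fintype.card_fun, ZMod.card, Fintype.card_fin]
  have cardFs : Fintype.card (Fin s → ZMod p) = p ^ s := by
    rw [Fintype.card_fun, ZMod.card, Fintype.card_fin]
  have cardCc : Nat.card {D₁ : Fin t → ZMod p // D₁ ∉ LinearMap.range B.mulVecLin}
      = p ^ t - p ^ n := by
    rw [Nat.card_eq_fintype_card, Fintype.card_subtype_compl, cardFt,
      ← Nat.card_eq_fintype_card, cardC]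
  have cardRc : Nat.card {D₂ : Fin s → ZMod p // D₂ ∉ LinearMap.range Bᵀ.mulVecLin}
      = p ^ s - p ^ n := by
    rw [Nat.card_eq_fintype_card, Fintype.card_subtype_compl, cardFs,
      ← Nat.card_eq_fintype_card, cardR]
  -- count for rank = n
  have hc0 : Nat.card {x : T // (borderedMatrix B x.1 x.2.1 x.2.2).rank = n} = p ^ (2 * n) := by
    rw [Nat.card_congr (Equiv.subtypeEquivRight (fun x : T => key0 x.1 x.2.1 x.2.2))]
    let e0 : {x : T // x.1 ∈ LinearMap.range B.mulVecLin
          ∧ x.2.1 ∈ LinearMap.range Bᵀ.mulVecLin ∧ x.2.2 = dstar x.1 x.2.1} ≃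
        {D₁ : Fin t → ZMod p // D₁ ∈ LinearMap.range B.mulVecLin} ×
        {D₂ : Fin s → ZMod p // D₂ ∈ LinearMap.range Bᵀ.mulVecLin} :=
      { toFun := fun x => (⟨x.1.1, x.2.1⟩, ⟨x.1.2.1, x.2.2.1⟩)
        invFun := fun y => ⟨(y.1.1, y.2.1, dstar y.1.1 y.2.1), y.1.2, y.2.2, rfl⟩
        left_inv := by
          rintro ⟨⟨a, b, c⟩, h1, h2, h3⟩
          have h3' : c = dstar a b := h3
          exact Subtype.ext (by show (a, b, dstar a b) = (a, b, c); rw [h3'])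
        right_inv := fun y => rfl }
    rw [Nat.card_congr e0, Nat.card_prod, cardC, cardR, ← pow_add, two_mul]
  -- count for rank = n + 2
  have hc2raw : Nat.card {x : T // (borderedMatrix B x.1 x.2.1 x.2.2).rank = n + 2}
      = (p ^ t - p ^ n) * ((p ^ s - p ^ n) * p) := by
    rw [Nat.card_congr (Equiv.subtypeEquivRight (fun x : T => key2 x.1 x.2.1 x.2.2))]
    let e2 : {x : T // x.1 ∉ LinearMap.range B.mulVecLin
          ∧ x.2.1 ∉ LinearMap.range Bᵀ.mulVecLin} ≃
        {D₁ : Fin t → ZMod p // D₁ ∉ LinearMap.range B.mulVecLin} ×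
        {D₂ : Fin s → ZMod p // D₂ ∉ LinearMap.range Bᵀ.mulVecLin} × ZMod p :=
      { toFun := fun x => (⟨x.1.1, x.2.1⟩, ⟨x.1.2.1, x.2.2⟩, x.1.2.2)
        invFun := fun y => ⟨(y.1.1, y.2.1.1, y.2.2), y.1.2, y.2.1.2⟩
        left_inv := fun x => rfl
        right_inv := fun y => rfl }
    rw [Nat.card_congr e2, Nat.card_prod, Nat.card_prod, cardCc, cardRc,
      Nat.card_eq_fintype_card, ZMod.card]
  have hpow_t : p ^ t = p ^ n * p ^ (t - n) := by
    rw [← pow_add]; congr 1; omega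
  have hpow_s : p ^ s = p ^ n * p ^ (s - n) := by
    rw [← pow_add]; congr 1; omega
  have h1a : 1 ≤ p ^ (t - n) := Nat.one_le_pow _ _ hp.pos
  have h1b : 1 ≤ p ^ (s - n) := Nat.one_le_pow _ _ hp.pos
  have hc2 : Nat.card {x : T // (borderedMatrix B x.1 x.2.1 x.2.2).rank = n + 2}
      = p ^ (2 * n + 1) * (p ^ (t - n) - 1) * (p ^ (s - n) - 1) := by
    rw [hc2raw, hpow_t, hpow_s]
    have e1 : p ^ n ≤ p ^ n * p ^ (t - n) := Nat.le_mul_of_pos_right _ (by omega)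
    have e2 : p ^ n ≤ p ^ n * p ^ (s - n) := Nat.le_mul_of_pos_right _ (by omega)
    have e3 : p ^ (2 * n + 1) = p ^ n * p ^ n * p := by
      rw [two_mul, pow_succ, pow_add]
    rw [e3]
    zify [e1, e2, h1a, h1b]
    ring
  -- count for rank = n + 1
  have hcT : Nat.card T = p ^ (t + s + 1) := by
    rw [Nat.card_eq_fintype_card]
    show Fintype.card ((Fin t → ZMod p) × (Fin s → ZMod p) × ZMod p) = _
    rw [Fintype.card_prod, Fintype.card_prod, cardFt, cardFs, ZMod.card,
      pow_add, pow_add, pow_one]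
    ring
  have hc1 : Nat.card {x : T // (borderedMatrix B x.1 x.2.1 x.2.2).rank = n + 1}
      = p ^ (2 * n) * (p ^ (t - n + 1) + p ^ (s - n + 1) - p - 1) := by
    have hdisj : Disjoint (fun x : T => (borderedMatrix B x.1 x.2.1 x.2.2).rank = n)
        (fun x : T => (borderedMatrix B x.1 x.2.1 x.2.2).rank = n + 2) := by
      rw [Pi.disjoint_iff]
      intro x
      rw [Prop.disjoint_iff]
      rintro ⟨ha, hb⟩
      omega
    have hor : Fintype.card {x : T // (borderedMatrix B x.1 x.2.1 x.2.2).rank = n ∨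
          (borderedMatrix B x.1 x.2.1 x.2.2).rank = n + 2}
        = Fintype.card {x : T // (borderedMatrix B x.1 x.2.1 x.2.2).rank = n}
          + Fintype.card {x : T // (borderedMatrix B x.1 x.2.1 x.2.2).rank = n + 2} :=
      Fintype.card_subtype_or_disjoint _ _ hdisj
    have hcompl : Fintype.card {x : T // (borderedMatrix B x.1 x.2.1 x.2.2).rank = n + 1}
        = Fintype.card T - Fintype.card {x : T // (borderedMatrix B x.1 x.2.1 x.2.2).rank = n ∨
            (borderedMatrix B x.1 x.2.1 x.2.2).rank = n + 2} := by
      rw [← Fintype.card_subtype_compl]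
      refine Fintype.card_congr (Equiv.subtypeEquivRight fun x => ?_)
      constructor
      · intro h
        push_neg
        constructor <;> omega
      · intro h
        rcases keyT x.1 x.2.1 x.2.2 with h0 | h1 | h2
        · exact absurd (Or.inl h0) h
        · exact h1
        · exact absurd (Or.inr h2) h
    -- arithmetic identity
    have harith : p ^ (2 * n) + (p ^ t - p ^ n) * ((p ^ s - p ^ n) * p)
        + p ^ (2 * n) * (p ^ (t - n + 1) + p ^ (s - n + 1) - p - 1) = p ^ (t + s + 1) := by
      have e1 : p ^ n ≤ p ^ n * p ^ (t - n) := Nat.le_mul_of_pos_right _ (by omega)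
      have e2 : p ^ n ≤ p ^ n * p ^ (s - n) := Nat.le_mul_of_pos_right _ (by omega)
      have e3 : p ^ (2 * n) = p ^ n * p ^ n := by rw [two_mul, pow_add]
      have e4 : p ^ (t - n + 1) = p ^ (t - n) * p := by rw [pow_succ]
      have e5 : p ^ (s - n + 1) = p ^ (s - n) * p := by rw [pow_succ]
      have e6 : p ^ (t + s + 1) = (p ^ n * p ^ (t - n)) * (p ^ n * p ^ (s - n)) * p := by
        rw [← pow_add, ← pow_add, ← pow_add, ← pow_succ]
        congr 1
        omega
      have e7 : p ≤ p ^ (t - n) * p + p ^ (s - n) * p := by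
        calc p = 1 * p := (one_mul p).symm
        _ ≤ p ^ (t - n) * p := Nat.mul_le_mul_right p h1a
        _ ≤ p ^ (t - n) * p + p ^ (s - n) * p := Nat.le_add_right _ _
      have e8 : 1 ≤ p ^ (t - n) * p + p ^ (s - n) * p - p := by
        have hb : p ≤ p ^ (s - n) * p := by
          calc p = 1 * p := (one_mul p).symm
          _ ≤ p ^ (s - n) * p := Nat.mul_le_mul_right p h1b
        have ha : p ≤ p ^ (t - n) * p := by
          calc p = 1 * p := (one_mul p).symm
          _ ≤ p ^ (t - n) * p := Nat.mul_le_mul_right p h1a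
        omega
      rw [hpow_t, hpow_s, e3, e4, e5, e6]
      zify [e1, e2, e7, e8]
      ring
    rw [Nat.card_eq_fintype_card, hcompl, hor, ← Nat.card_eq_fintype_card,
      ← Nat.card_eq_fintype_card, ← Nat.card_eq_fintype_card, hc0, hc2raw, hcT, ← harith]
    omega
  exact ⟨hc0, hc1, hc2, keyT⟩
end

section
/- Fix j₀ : Fin s and let c' := c.submatrix id j₀.succAbove be the t × (s - 1) matrix obtained from c by deleting column j₀. Let ρ be an irreducible projective α-representation of G on a nonzero finite-dimensional complex vector space V. Then the restriction of ρ to the subgroup H := {g : G | g.2 j₀ = 0} is irreducible — i.e. the only ℂ-submodules W of V with (ρ g) '' W ⊆ W for all g ∈ G satisfying g.2 j₀ = 0 are ⊥ and ⊤ — if and only if c'.rank = c.rank. -/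
def expE (p : ℕ) {t s : ℕ} (r : Fin t → ℕ) (hr : ∀ i, 1 ≤ r i)
    (c : Matrix (Fin t) (Fin s) (ZMod p))
    (g h : (∀ i : Fin t, ZMod (p ^ r i)) × (Fin s → ZMod p)) : ZMod p :=
  ∑ i, ∑ j, c i j *
      ZMod.castHom (dvd_pow_self p (Nat.one_le_iff_ne_zero.mp (hr i))) (ZMod p) (h.1 i) *
      g.2 j

lemma bilinAlpha_eq (p : ℕ) {t s : ℕ} (r : Fin t → ℕ) (hr : ∀ i, 1 ≤ r i)
    (c : Matrix (Fin t) (Fin s) (ZMod p)) (ξ : ℂˣ) (g h) :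
    bilinAlpha p r hr c ξ g h = ξ ^ (expE p r hr c g h).val := rfl

lemma expE_zero_snd (p : ℕ) {t s : ℕ} (r : Fin t → ℕ) (hr : ∀ i, 1 ≤ r i)
    (c : Matrix (Fin t) (Fin s) (ZMod p)) (g h) (hg : g.2 = 0) :
    expE p r hr c g h = 0 := by
  simp [expE, hg]

lemma expE_zero_fst (p : ℕ) {t s : ℕ} (r : Fin t → ℕ) (hr : ∀ i, 1 ≤ r i)
    (c : Matrix (Fin t) (Fin s) (ZMod p)) (g h) (hh : h.1 = 0) :
    expE p r hr c g h = 0 := by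
  simp [expE, hh]

lemma expE_zero_mulVec (p : ℕ) {t s : ℕ} (r : Fin t → ℕ) (hr : ∀ i, 1 ≤ r i)
    (c : Matrix (Fin t) (Fin s) (ZMod p)) (g h) (hg : c.mulVec g.2 = 0) :
    expE p r hr c g h = 0 := by
  rw [expE]
  refine Finset.sum_eq_zero fun i _ => ?_
  have h0 : ∑ j, c i j * g.2 j = 0 := congrFun hg i
  calc ∑ j, c i j *
      ZMod.castHom (dvd_pow_self p (Nat.one_le_iff_ne_zero.mp (hr i))) (ZMod p) (h.1 i) *
      g.2 j
      = ZMod.castHom (dvd_pow_self p (Nat.one_le_iff_ne_zero.mp (hr i))) (ZMod p) (h.1 i) *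
        ∑ j, c i j * g.2 j := by
        rw [Finset.mul_sum]; exact Finset.sum_congr rfl fun j _ => by ring
    _ = 0 := by rw [h0, mul_zero]

lemma expE_eq_col (p : ℕ) {t s : ℕ} (r : Fin t → ℕ) (hr : ∀ i, 1 ≤ r i)
    (c : Matrix (Fin t) (Fin s) (ZMod p)) (g h) :
    expE p r hr c g h =
      ∑ j, (∑ i, (ZMod.castHom (dvd_pow_self p (Nat.one_le_iff_ne_zero.mp (hr i)))
        (ZMod p) (h.1 i)) * c i j) * g.2 j := by
  rw [expE, Finset.sum_comm]
  refine Finset.sum_congr rfl fun j _ => ?_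
  rw [Finset.sum_mul]
  exact Finset.sum_congr rfl fun i _ => by ring

lemma mulVec_insertNth (p : ℕ) {t s : ℕ} (c : Matrix (Fin t) (Fin (s+1)) (ZMod p))
    (j₀ : Fin (s+1)) (k : Fin s → ZMod p) :
    c.mulVec (Fin.insertNth j₀ (0 : ZMod p) k) = (c.submatrix id j₀.succAbove).mulVec k := by
  funext i
  simp only [Matrix.mulVec, dotProduct, Matrix.submatrix_apply, id_eq]
  rw [Fin.sum_univ_succAbove _ j₀]
  simp

lemma schur_aux {V : Type} [AddCommGroup V] [Module ℂ V] [FiniteDimensional ℂ V] [Nontrivial V]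
    {G : Type*} (ρ : G → (V →ₗ[ℂ] V)) (P : G → Prop)
    (hirr : ∀ W : Submodule ℂ V, (∀ g, P g → (ρ g) '' (W : Set V) ⊆ (W : Set V)) → W = ⊥ ∨ W = ⊤)
    (f : V →ₗ[ℂ] V) (hf : ∀ g, P g → f ∘ₗ ρ g = ρ g ∘ₗ f) :
    ∃ μ : ℂ, f = μ • (LinearMap.id : V →ₗ[ℂ] V) := by
  obtain ⟨μ, hμ⟩ := Module.End.exists_eigenvalue (f : Module.End ℂ V)
  refine ⟨μ, ?_⟩
  have hinv : ∀ g, P g → (ρ g) '' ((Module.End.eigenspace f μ : Submodule ℂ V) : Set V)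
      ⊆ ((Module.End.eigenspace f μ : Submodule ℂ V) : Set V) := by
    rintro g hg y ⟨x, hx, rfl⟩
    rw [SetLike.mem_coe, Module.End.mem_eigenspace_iff] at hx ⊢
    have h2 := congrArg (fun F => F x) (hf g hg)
    simp only [LinearMap.comp_apply] at h2
    rw [show f (ρ g x) = ρ g (f x) from h2, hx, map_smul]
  rcases hirr _ hinv with h | h
  · exact absurd h hμ
  · refine LinearMap.ext fun x => ?_
    have hx : x ∈ Module.End.eigenspace f μ := h ▸ Submodule.mem_top
    rw [Module.End.mem_eigenspace_iff] at hx
    simpa using hx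

theorem restriction_irreducible_iff_rank_eq (p t s : ℕ) (hp : p.Prime) (ht : 1 ≤ t)
    (r : Fin t → ℕ) (hr : ∀ i, 1 ≤ r i)
    (c : Matrix (Fin t) (Fin (s + 1)) (ZMod p)) (ξ : ℂˣ) (hξ : IsPrimitiveRoot ξ p)
    (j₀ : Fin (s + 1))
    (V : Type) [AddCommGroup V] [Module ℂ V] [FiniteDimensional ℂ V] [Nontrivial V]
    (ρ : ((∀ i : Fin t, ZMod (p ^ r i)) × (Fin (s + 1) → ZMod p)) → (V →ₗ[ℂ] V))
    (hρ0 : ρ 0 = LinearMap.id)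
    (hρ : ∀ g h, ρ g ∘ₗ ρ h = (bilinAlpha p r hr c ξ g h : ℂ) • ρ (g + h))
    (hirr : ∀ W : Submodule ℂ V,
      (∀ g, (ρ g) '' (W : Set V) ⊆ (W : Set V)) → W = ⊥ ∨ W = ⊤) :
    (∀ W : Submodule ℂ V,
        (∀ g, g.2 j₀ = 0 → (ρ g) '' (W : Set V) ⊆ (W : Set V)) → W = ⊥ ∨ W = ⊤) ↔
      (c.submatrix id j₀.succAbove).rank = c.rank := by
  haveI : Fact p.Prime := ⟨hp⟩
  set c' := c.submatrix id j₀.succAbove with hc'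
  -- notation for the projection
  set π : ∀ i : Fin t, ZMod (p ^ r i) →+* ZMod p := fun i =>
    ZMod.castHom (dvd_pow_self p (Nat.one_le_iff_ne_zero.mp (hr i))) (ZMod p) with hπ
  -- if the exponent vanishes, ρ multiplies
  have hone : ∀ g h, expE p r hr c g h = 0 → ρ g ∘ₗ ρ h = ρ (g + h) := by
    intro g h hE
    rw [hρ g h, bilinAlpha_eq, hE]
    simp
  -- ρ g is never zero
  have hne : ∀ g, ρ g ≠ 0 := by
    intro g hg
    obtain ⟨x, hx⟩ := exists_ne (0 : V)
    have h1 := hρ g (-g)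
    rw [hg, add_neg_cancel, hρ0] at h1
    have h2 := congrArg (fun F => F x) h1
    simp only [LinearMap.zero_comp, LinearMap.zero_apply, LinearMap.smul_apply,
      LinearMap.id_apply] at h2
    exact hx (by
      have := (smul_eq_zero.mp h2.symm).resolve_left (Units.ne_zero _)
      exact this)
  -- range of c' ≤ range of c
  have hsub : LinearMap.range c'.mulVecLin ≤ LinearMap.range c.mulVecLin := by
    rintro x ⟨k, rfl⟩
    exact ⟨Fin.insertNth j₀ (0 : ZMod p) k, by
      rw [Matrix.mulVecLin_apply, Matrix.mulVecLin_apply, mulVec_insertNth]⟩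
  constructor
  · -- restricted irreducibility → rank equality
    intro hHirr
    by_contra hne'
    have hlt : c'.rank < c.rank :=
      lt_of_le_of_ne (Submodule.finrank_mono hsub) hne'
    -- kernels of the transposes
    have hker_le : LinearMap.ker c.transpose.mulVecLin ≤ LinearMap.ker c'.transpose.mulVecLin := by
      intro v hv
      rw [LinearMap.mem_ker] at hv ⊢
      funext j
      have h0 : ∀ j', c.transpose.mulVec v j' = 0 := fun j' => congrFun hv j'
      show c'.transpose.mulVec v j = 0
      calc c'.transpose.mulVec v j = ∑ i, c i (j₀.succAbove j) * v i := by
            simp [Matrix.mulVec, dotProduct, Matrix.transpose_apply, hc',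
              Matrix.submatrix_apply]
        _ = c.transpose.mulVec v (j₀.succAbove j) := by
            simp [Matrix.mulVec, dotProduct, Matrix.transpose_apply]
        _ = 0 := h0 _
    have hk1 := LinearMap.finrank_range_add_finrank_ker (c.transpose.mulVecLin)
    have hk2 := LinearMap.finrank_range_add_finrank_ker (c'.transpose.mulVecLin)
    have hrt : Module.finrank (ZMod p) (LinearMap.range c.transpose.mulVecLin) = c.rank := by
      rw [show Module.finrank (ZMod p) (LinearMap.range c.transpose.mulVecLin) = c.transpose.rank from rfl,
        Matrix.rank_transpose]
    have hrt' : Module.finrank (ZMod p) (LinearMap.range c'.transpose.mulVecLin) = c'.rank := by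
      rw [show Module.finrank (ZMod p) (LinearMap.range c'.transpose.mulVecLin) = c'.transpose.rank from rfl,
        Matrix.rank_transpose]
    rw [hrt] at hk1
    rw [hrt'] at hk2
    have hker_ne : LinearMap.ker c.transpose.mulVecLin ≠ LinearMap.ker c'.transpose.mulVecLin := by
      intro he
      rw [he] at hk1
      omega
    obtain ⟨v, hv', hv⟩ := SetLike.exists_of_lt (lt_of_le_of_ne hker_le hker_ne)
    -- build z = (m, 0) with π m = v
    set m : ∀ i : Fin t, ZMod (p ^ r i) := fun i => ((v i).val : ZMod (p ^ r i)) with hm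
    have hπm : ∀ i, π i (m i) = v i := by
      intro i
      rw [hm]
      simp only [map_natCast]
      rw [ZMod.natCast_val, ZMod.cast_id]
    set z : (∀ i : Fin t, ZMod (p ^ r i)) × (Fin (s + 1) → ZMod p) := (m, 0) with hz
    -- the row vector w = vᵀ c
    set w : Fin (s + 1) → ZMod p := fun j => ∑ i, v i * c i j with hw
    have hw_succ : ∀ j : Fin s, w (j₀.succAbove j) = 0 := by
      intro j
      have h0 : c'.transpose.mulVec v j = 0 := by
        rw [LinearMap.mem_ker] at hv'
        exact congrFun hv' j
      calc w (j₀.succAbove j) = ∑ i, v i * c i (j₀.succAbove j) := rfl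
        _ = ∑ i, c' i j * v i := by
            refine Finset.sum_congr rfl fun i _ => ?_
            rw [hc']
            simp [Matrix.submatrix_apply, mul_comm]
        _ = c'.transpose.mulVec v j := by
            simp [Matrix.mulVec, dotProduct, Matrix.transpose_apply]
        _ = 0 := h0
    have hmvt : ∀ j, c.transpose.mulVec v j = w j := by
      intro j
      simp only [Matrix.mulVec, dotProduct, Matrix.transpose_apply, hw]
      exact Finset.sum_congr rfl fun i _ => mul_comm _ _
    have hwj₀ : w j₀ ≠ 0 := by
      intro h0
      apply hv
      rw [LinearMap.mem_ker]
      funext j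
      show c.transpose.mulVec v j = 0
      rw [hmvt]
      rcases eq_or_ne j j₀ with rfl | hj
      · exact h0
      · obtain ⟨j', hj'⟩ := Fin.exists_succAbove_eq hj
        rw [← hj']
        exact hw_succ j'
    -- expE of anything in H against z vanishes
    have hEHz : ∀ h', h'.2 j₀ = 0 → expE p r hr c h' z = 0 := by
      intro h' hh'
      rw [expE_eq_col]
      refine Finset.sum_eq_zero fun j _ => ?_
      have : (∑ i, (π i) (z.1 i) * c i j) = w j := by
        refine Finset.sum_congr rfl fun i _ => ?_
        rw [show z.1 i = m i from rfl, hπm i]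
      rw [show (∑ i, (ZMod.castHom (dvd_pow_self p (Nat.one_le_iff_ne_zero.mp (hr i)))
        (ZMod p) (z.1 i)) * c i j) = w j from this]
      rcases eq_or_ne j j₀ with rfl | hj
      · rw [hh', mul_zero]
      · obtain ⟨j', hj'⟩ := Fin.exists_succAbove_eq hj
        rw [← hj', hw_succ j', zero_mul]
    -- ρ z commutes with ρ h' for h' ∈ H
    have hcomm : ∀ h', h'.2 j₀ = 0 → ρ z ∘ₗ ρ h' = ρ h' ∘ₗ ρ z := by
      intro h' hh'
      rw [hone z h' (expE_zero_snd p r hr c z h' rfl),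
        hone h' z (hEHz h' hh'), add_comm]
    obtain ⟨μ, hμ⟩ := schur_aux ρ (fun g => g.2 j₀ = 0) hHirr (ρ z) hcomm
    -- contradiction with g' = (0, single j₀ 1)
    set g' : (∀ i : Fin t, ZMod (p ^ r i)) × (Fin (s + 1) → ZMod p) :=
      (0, Pi.single j₀ 1) with hg'
    have e1 : expE p r hr c g' z = w j₀ := by
      rw [expE_eq_col]
      have hterm : ∀ j, (∑ i, (ZMod.castHom (dvd_pow_self p
          (Nat.one_le_iff_ne_zero.mp (hr i))) (ZMod p) (z.1 i)) * c i j) * g'.2 j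
          = w j * g'.2 j := by
        intro j
        congr 1
        refine Finset.sum_congr rfl fun i _ => ?_
        rw [show z.1 i = m i from rfl, hπm i]
      rw [Finset.sum_congr rfl fun j _ => hterm j]
      have hg'2 : g'.2 = Pi.single j₀ (1 : ZMod p) := rfl
      rw [hg'2]
      simp [Pi.single_apply, mul_ite]
    have e2 : ρ z ∘ₗ ρ g' = ρ (z + g') := hone z g' (expE_zero_snd p r hr c z g' rfl)
    have e3 : ρ g' ∘ₗ ρ z = (bilinAlpha p r hr c ξ g' z : ℂ) • ρ (g' + z) := hρ g' z
    rw [hμ] at e2 e3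
    rw [LinearMap.smul_comp, LinearMap.id_comp] at e2
    rw [LinearMap.comp_smul, LinearMap.comp_id] at e3
    rw [add_comm z g'] at e2
    have e4 : ((bilinAlpha p r hr c ξ g' z : ℂ) - 1) • ρ (g' + z) = 0 := by
      rw [sub_smul, one_smul, ← e3, ← e2, sub_self]
    have e5 : (bilinAlpha p r hr c ξ g' z : ℂ) = 1 := by
      have h6 := (smul_eq_zero.mp e4).resolve_right (hne (g' + z))
      exact sub_eq_zero.mp h6
    have e6 : bilinAlpha p r hr c ξ g' z = 1 := Units.ext e5
    rw [bilinAlpha_eq, e1] at e6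
    have hval_pos : 0 < (w j₀).val := by
      rcases Nat.eq_zero_or_pos (w j₀).val with h0 | h0
      · exact absurd ((ZMod.val_eq_zero _).mp h0) hwj₀
      · exact h0
    exact hξ.pow_ne_one_of_pos_of_lt hval_pos.ne' (ZMod.val_lt _) e6
  · -- rank equality → restricted irreducibility
    intro hrank W hW
    apply hirr W
    intro g
    -- find h ∈ H with the same column image
    have hcol : LinearMap.range c'.mulVecLin = LinearMap.range c.mulVecLin :=
      Submodule.eq_of_le_of_finrank_eq hsub hrank
    have : c.mulVec g.2 ∈ LinearMap.range c'.mulVecLin := by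
      rw [hcol]; exact ⟨g.2, rfl⟩
    obtain ⟨k'', hk''⟩ := this
    rw [Matrix.mulVecLin_apply] at hk''
    set h : (∀ i : Fin t, ZMod (p ^ r i)) × (Fin (s + 1) → ZMod p) :=
      (g.1, Fin.insertNth j₀ (0 : ZMod p) k'') with hh
    have hhH : h.2 j₀ = 0 := by rw [hh]; simp
    set z : (∀ i : Fin t, ZMod (p ^ r i)) × (Fin (s + 1) → ZMod p) := g - h with hzdef
    have hz1 : z.1 = 0 := by rw [hzdef, hh]; show g.1 - g.1 = 0; rw [sub_self]
    have hz2 : c.mulVec z.2 = 0 := by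
      have : z.2 = g.2 - Fin.insertNth j₀ (0 : ZMod p) k'' := rfl
      rw [this, Matrix.mulVec_sub, mulVec_insertNth, hk'', sub_self]
    have hcomm : ∀ g'', (ρ z) ∘ₗ ρ g'' = ρ g'' ∘ₗ ρ z := by
      intro g''
      rw [hone z g'' (expE_zero_mulVec p r hr c z g'' hz2),
        hone g'' z (expE_zero_fst p r hr c g'' z hz1), add_comm]
    obtain ⟨μ, hμ⟩ := schur_aux ρ (fun _ => True)
      (fun W' hW' => hirr W' (fun g'' => hW' g'' trivial)) (ρ z) (fun g'' _ => hcomm g'')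
    have hg_eq : ρ g = μ • ρ h := by
      have h1 : ρ z ∘ₗ ρ h = ρ (z + h) := hone z h (expE_zero_mulVec p r hr c z h hz2)
      rw [hμ, LinearMap.smul_comp, LinearMap.id_comp] at h1
      rw [h1]
      congr 1
      rw [hzdef, sub_add_cancel]
    rintro x ⟨u, hu, rfl⟩
    have hhu : ρ h u ∈ (W : Set V) := hW h hhH (Set.mem_image_of_mem _ hu)
    rw [SetLike.mem_coe] at hhu ⊢
    rw [hg_eq]
    exact W.smul_mem μ hhu
end
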